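/- arXiv:2103.07079 — 11 statements merged into one kernel-verified Lean document; each statement's English description precedes it below -/
import Mathlib

section
/- Let K = 2^m where m is a positive integer, and let d ≥ 1. If A, B are real symmetric positive definite d×d matrices satisfying (1 − 1/(2K)) I ⪯ A ⪯ I and (1 − 1/(2K)) I ⪯ B ⪯ I, then (1/2) ‖(AB)^K + (BA)^K‖ ≤ ‖(1/2)(AB + BA)‖^K. -/
/-!
Write `T`, `U` for the operators of `A`, `B` on Euclidean space, `a = 1 - 1/(2K)` and `P = TU`,
so that `P* = UT`. If `⟪S² x, x⟫ ≥ 0` for all `x`, then `⟪(S² + S*²) x, x⟫ = 2 ⟪S x, S* x⟫` lies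
between `0` and `‖S x + S* x‖² / 2`, whence `‖S² + S*²‖ ≤ ‖S + S*‖² / 2`. Applied to
`S = P^(2^j)` for `j < m`, this yields `‖P^K + P*^K‖ ≤ 2 (‖P + P*‖ / 2)^K`.

The positivity comes from a similarity: with `ρ = √T` and `Q = ρUρ` we have `P^k ρ = ρ Q^k` and
`a² ≤ Q ≤ 1`, so `⟪P^k ρy, ρy⟫ = ⟪T y, Q^k y⟫`, and repeated squaring gives `a^(2k) ≤ Q^k ≤ 1`.
Operators with `a ≤ T ≤ 1` and `b ≤ V ≤ 1` satisfy `⟪T x, V x⟫ ≥ 0` as soon as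
`1 - a ≤ (1 + a) b` (centre `T` at `(1 + a) / 2`), and Bernoulli's inequality `a^K ≥ 1/2` gives
`a^(2k) ≥ 1/4` for `k ≤ K`, which is enough.
-/

/-- Spectral norm (operator 2-norm) of a real square matrix. -/
noncomputable def specNorm {d : ℕ} (A : Matrix (Fin d) (Fin d) ℝ) : ℝ :=
  ‖Matrix.toEuclideanCLM (𝕜 := ℝ) A‖

open scoped RealInnerProductSpace

namespace ContinuousLinearMap

variable {E : Type*} [NormedAddCommGroup E] [InnerProductSpace ℝ E]

lemma surjective_of_smul_one_le [FiniteDimensional ℝ E] {T : E →L[ℝ] E} {a : ℝ} (ha : 0 < a)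
    (h : a • 1 ≤ T) : Function.Surjective T := by
  have hinj : Function.Injective T := by
    refine (injective_iff_map_eq_zero T).2 fun x hx => ?_
    have hpos := ((le_def _ _).1 h).inner_nonneg_left x
    rw [sub_apply, hx, smul_apply, one_apply_eq_self, zero_sub, inner_neg_left,
      real_inner_smul_left, real_inner_self_eq_norm_sq, neg_nonneg] at hpos
    exact norm_eq_zero.1 (pow_eq_zero_iff two_ne_zero |>.1
      (le_antisymm (nonpos_of_mul_nonpos_right hpos ha) (sq_nonneg _)))
  exact (LinearMap.injective_iff_surjective (f := (T : E →ₗ[ℝ] E))).1 hinj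

variable [CompleteSpace E]

lemma _root_.IsSelfAdjoint.inner_left_eq_inner_right {T : E →L[ℝ] E} (hT : IsSelfAdjoint T)
    (x y : E) : ⟪T x, y⟫ = ⟪x, T y⟫ :=
  hT.isSymmetric x y

lemma smul_one_le_iff_inner {T : E →L[ℝ] E} (hT : IsSelfAdjoint T) {a : ℝ} :
    a • 1 ≤ T ↔ ∀ x, a * ‖x‖ ^ 2 ≤ ⟪T x, x⟫ := by
  rw [le_def, isPositive_iff', and_iff_right (hT.sub (.smul (.all a) (.one _)))]
  simp [inner_sub_left, real_inner_smul_left]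

lemma le_smul_one_iff_inner {T : E →L[ℝ] E} (hT : IsSelfAdjoint T) {b : ℝ} :
    T ≤ b • 1 ↔ ∀ x, ⟪T x, x⟫ ≤ b * ‖x‖ ^ 2 := by
  rw [le_def, isPositive_iff', and_iff_right ((IsSelfAdjoint.smul (.all b) (.one _)).sub hT)]
  simp [inner_sub_left, real_inner_smul_left]

lemma le_one_iff_inner {T : E →L[ℝ] E} (hT : IsSelfAdjoint T) :
    T ≤ 1 ↔ ∀ x, ⟪T x, x⟫ ≤ ‖x‖ ^ 2 := by
  simpa using le_smul_one_iff_inner hT (b := 1)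

lemma isSelfAdjoint_of_le {S T : E →L[ℝ] E} (h : S ≤ T) (hT : IsSelfAdjoint T) :
    IsSelfAdjoint S := by
  simpa using hT.sub ((le_def S T).1 h).isSelfAdjoint

lemma norm_le_of_abs_inner_le {T : E →L[ℝ] E} (hT : IsSelfAdjoint T) {c : ℝ} (hc : 0 ≤ c)
    (h : ∀ x, |⟪T x, x⟫| ≤ c * ‖x‖ ^ 2) : ‖T‖ ≤ c := by
  rw [norm_eq_iSup_rayleighQuotient T hT.isSymmetric]
  refine ciSup_le fun x => ?_
  rcases eq_or_ne x 0 with rfl | hx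
  · simpa using hc
  · rw [rayleighQuotient, reApplyInnerSelf_apply, RCLike.re_to_real, abs_div, abs_sq,
      div_le_iff₀ (by positivity)]
    exact h x

lemma norm_sub_smul_one_le {T : E →L[ℝ] E} {a b : ℝ} (hab : a ≤ b) (ha : a • 1 ≤ T)
    (hb : T ≤ b • 1) : ‖T - ((a + b) / 2) • 1‖ ≤ (b - a) / 2 := by
  have hT := isSelfAdjoint_of_le hb (.smul (.all b) (.one _))
  refine norm_le_of_abs_inner_le (hT.sub (.smul (.all _) (.one _))) (by linarith) fun x => ?_
  have h₀ := (smul_one_le_iff_inner hT).1 ha x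
  have h₁ := (le_smul_one_iff_inner hT).1 hb x
  simp only [sub_apply, smul_apply, one_apply_eq_self, inner_sub_left, real_inner_smul_left,
    real_inner_self_eq_norm_sq, abs_le]
  constructor <;> linarith

lemma norm_le_one_of_smul_one_le {V : E →L[ℝ] E} {b : ℝ} (hb : -1 ≤ b) (h₀ : b • 1 ≤ V)
    (h₁ : V ≤ 1) : ‖V‖ ≤ 1 := by
  have hV := isSelfAdjoint_of_le h₁ (.one _)
  refine norm_le_of_abs_inner_le hV zero_le_one fun x => ?_
  have := (smul_one_le_iff_inner hV).1 h₀ x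
  rw [abs_le, one_mul]
  exact ⟨by nlinarith [sq_nonneg ‖x‖], (le_one_iff_inner hV).1 h₁ x⟩

lemma inner_apply_apply_nonneg {T V : E →L[ℝ] E} {a b : ℝ} (ha : a ≤ 1) (hb : 0 ≤ b)
    (hT : T ∈ Set.Icc (a • 1) 1) (hV : V ∈ Set.Icc (b • 1) 1)
    (hab : 1 - a ≤ (1 + a) * b) (x : E) : 0 ≤ ⟪T x, V x⟫ := by
  obtain ⟨hT₀, hT₁⟩ := hT
  obtain ⟨hV₀, hV₁⟩ := hV
  have hV := isSelfAdjoint_of_le hV₁ (.one _)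
  have ha' : 0 ≤ 1 + a := by nlinarith
  have hVx : ‖V x‖ ≤ ‖x‖ := by
    simpa using V.le_of_opNorm_le (norm_le_one_of_smul_one_le (by linarith) hV₀ hV₁) x
  have hTx : ‖(T - ((a + 1) / 2) • 1) x‖ ≤ (1 - a) / 2 * ‖x‖ :=
    (T - _).le_of_opNorm_le (by simpa using norm_sub_smul_one_le ha hT₀ (by simpa using hT₁)) x
  have hsplit : ⟪T x, V x⟫ = (a + 1) / 2 * ⟪x, V x⟫ + ⟪(T - ((a + 1) / 2) • 1) x, V x⟫ := by
    simp only [sub_apply, smul_apply, one_apply_eq_self, inner_sub_left, real_inner_smul_left]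
    ring
  have h₁ : b * ‖x‖ ^ 2 ≤ ⟪x, V x⟫ := by
    rw [real_inner_comm]
    exact (smul_one_le_iff_inner hV).1 hV₀ x
  have h₂ : -((1 - a) / 2 * ‖x‖ * ‖x‖) ≤ ⟪(T - ((a + 1) / 2) • 1) x, V x⟫ := by
    refine neg_le_of_abs_le ((abs_real_inner_le_norm _ _).trans ?_)
    gcongr
  nlinarith [mul_nonneg (sub_nonneg.2 hab) (sq_nonneg ‖x‖)]

lemma inner_sq_apply_self_eq_norm_sq {V : E →L[ℝ] E} (hV : IsSelfAdjoint V) (x : E) :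
    ⟪(V ^ 2) x, x⟫ = ‖V x‖ ^ 2 := by
  rw [pow_two, mul_apply_eq_comp, hV.inner_left_eq_inner_right, real_inner_self_eq_norm_sq]

lemma sq_le_one_of_norm_le_one {V : E →L[ℝ] E} (hV : IsSelfAdjoint V) (h : ‖V‖ ≤ 1) :
    V ^ 2 ≤ 1 := by
  refine (le_one_iff_inner (hV.pow 2)).2 fun x => ?_
  rw [inner_sq_apply_self_eq_norm_sq hV]
  have := V.le_of_opNorm_le h x
  gcongr
  simpa using this

lemma sq_smul_one_le_sq {V : E →L[ℝ] E} {b : ℝ} (hb : 0 ≤ b) (hV : IsSelfAdjoint V)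
    (h : b • 1 ≤ V) : b ^ 2 • 1 ≤ V ^ 2 := by
  refine (smul_one_le_iff_inner (hV.pow 2)).2 fun x => ?_
  rw [inner_sq_apply_self_eq_norm_sq hV, ← mul_pow]
  have hx : b * ‖x‖ ^ 2 ≤ ‖V x‖ * ‖x‖ :=
    ((smul_one_le_iff_inner hV).1 h x).trans (real_inner_le_norm _ _)
  rcases (norm_nonneg x).eq_or_lt with hx0 | hx0
  · simp [← hx0]
  · gcongr
    nlinarith

lemma pow_two_pow_mem_Icc {V : E →L[ℝ] E} {b : ℝ} (hb : 0 ≤ b) (hV : V ∈ Set.Icc (b • 1) 1)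
    (n : ℕ) : V ^ 2 ^ n ∈ Set.Icc (b ^ 2 ^ n • 1) 1 := by
  induction n with
  | zero => simpa using hV
  | succ n ih =>
    have hsa := isSelfAdjoint_of_le ih.2 (.one _)
    have hb' : 0 ≤ b ^ 2 ^ n := by positivity
    rw [pow_succ, pow_mul, pow_mul]
    exact ⟨sq_smul_one_le_sq hb' hsa ih.1,
      sq_le_one_of_norm_le_one hsa (norm_le_one_of_smul_one_le (by linarith) ih.1 ih.2)⟩

lemma conj_mem_Icc {ρ T U : E →L[ℝ] E} {a b : ℝ} (hρ : IsSelfAdjoint ρ) (hρT : ρ * ρ = T)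
    (hT : T ∈ Set.Icc (a • 1) 1) (hb : 0 ≤ b) (hU : U ∈ Set.Icc (b • 1) 1) :
    ρ * U * ρ ∈ Set.Icc ((a * b) • 1) 1 := by
  have hTsa := isSelfAdjoint_of_le hT.2 (.one _)
  have hUsa := isSelfAdjoint_of_le hU.2 (.one _)
  have hsa : IsSelfAdjoint (ρ * U * ρ) := by
    simp [IsSelfAdjoint, star_mul, hρ.star_eq, hUsa.star_eq, mul_assoc]
  have hform (x : E) : ⟪(ρ * U * ρ) x, x⟫ = ⟪U (ρ x), ρ x⟫ := by
    rw [mul_apply_eq_comp, mul_apply_eq_comp, hρ.inner_left_eq_inner_right]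
  have hnorm (x : E) : ‖ρ x‖ ^ 2 = ⟪T x, x⟫ := by
    rw [← real_inner_self_eq_norm_sq, ← hρ.inner_left_eq_inner_right, ← mul_apply_eq_comp, hρT]
  refine ⟨(smul_one_le_iff_inner hsa).2 fun x => ?_, (le_one_iff_inner hsa).2 fun x => ?_⟩
  · have h₁ := (smul_one_le_iff_inner hTsa).1 hT.1 x
    have h₂ := (smul_one_le_iff_inner hUsa).1 hU.1 (ρ x)
    rw [hform, mul_comm a, mul_assoc]
    rw [hnorm] at h₂
    nlinarith
  · have h₁ := (le_one_iff_inner hTsa).1 hT.2 x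
    have h₂ := (le_one_iff_inner hUsa).1 hU.2 (ρ x)
    rw [hform]
    rw [hnorm] at h₂
    linarith

lemma inner_mul_pow_two_pow_apply_self_nonneg {ρ T U : E →L[ℝ] E} {a b : ℝ}
    (hρ : IsSelfAdjoint ρ) (hρT : ρ * ρ = T) (hT_surj : Function.Surjective T)
    (ha₀ : 0 ≤ a) (ha₁ : a ≤ 1) (hb : 0 ≤ b) (hT : T ∈ Set.Icc (a • 1) 1)
    (hU : U ∈ Set.Icc (b • 1) 1) {n : ℕ} (hab : 1 - a ≤ (1 + a) * (a * b) ^ 2 ^ n) (x : E) :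
    0 ≤ ⟪((T * U) ^ 2 ^ n) x, x⟫ := by
  set Q := ρ * U * ρ
  have hQ := pow_two_pow_mem_Icc (mul_nonneg ha₀ hb) (conj_mem_Icc hρ hρT hT hb hU) n
  have hsemi : SemiconjBy ρ (Q ^ 2 ^ n) ((T * U) ^ 2 ^ n) := by
    refine SemiconjBy.pow_right ?_ _
    simp only [SemiconjBy, Q, ← hρT, mul_assoc]
  have hT_eq (z : E) : T z = ρ (ρ z) := by rw [← hρT, mul_apply_eq_comp]
  have hpow (z : E) : ((T * U) ^ 2 ^ n) (ρ z) = ρ ((Q ^ 2 ^ n) z) := by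
    rw [← mul_apply_eq_comp, ← hsemi.eq, mul_apply_eq_comp]
  obtain ⟨y, rfl⟩ := hT_surj x
  rw [hT_eq, hpow, hρ.inner_left_eq_inner_right, ← hT_eq (ρ y), real_inner_comm]
  exact inner_apply_apply_nonneg ha₁ (pow_nonneg (mul_nonneg ha₀ hb) _) hT hQ hab (ρ y)

lemma norm_sq_add_star_sq_le {S : E →L[ℝ] E} (h : ∀ x, 0 ≤ ⟪(S ^ 2) x, x⟫) :
    ‖S ^ 2 + star S ^ 2‖ ≤ ‖S + star S‖ ^ 2 / 2 := by
  have hsa : IsSelfAdjoint (S ^ 2 + star S ^ 2) := by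
    simp [IsSelfAdjoint, star_pow, add_comm]
  have hstar (R : E →L[ℝ] E) (y z : E) : ⟪star R y, z⟫ = ⟪y, R z⟫ := by
    rw [star_eq_adjoint, adjoint_inner_left]
  have hform (x : E) : ⟪(S ^ 2 + star S ^ 2) x, x⟫ = 2 * ⟪S x, star S x⟫ := by
    have e : ⟪S (S x), x⟫ = ⟪S x, star S x⟫ := by rw [real_inner_comm, ← hstar, real_inner_comm]
    simp only [add_apply, pow_two, mul_apply_eq_comp, inner_add_left]
    rw [e, hstar, real_inner_comm (S x)]
    ring
  refine norm_le_of_abs_inner_le hsa (by positivity) fun x => ?_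
  have h₀ : 0 ≤ ⟪(S ^ 2 + star S ^ 2) x, x⟫ := by
    rw [add_apply, inner_add_left, ← star_pow, hstar, real_inner_comm ((S ^ 2) x) x]
    linarith [h x]
  have h₁ := (S + star S).le_opNorm x
  rw [add_apply] at h₁
  rw [abs_of_nonneg h₀, hform]
  nlinarith [norm_add_sq_real (S x) (star S x), norm_sub_sq_real (S x) (star S x),
    norm_nonneg (S x + star S x), sq_nonneg ‖S x - star S x‖]

lemma norm_pow_two_pow_add_star_le (P : E →L[ℝ] E) (n : ℕ)
    (h : ∀ j < n, ∀ x, 0 ≤ ⟪(P ^ 2 ^ (j + 1)) x, x⟫) :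
    ‖P ^ 2 ^ n + star P ^ 2 ^ n‖ ≤ 2 * (‖P + star P‖ / 2) ^ 2 ^ n := by
  induction n with
  | zero => simp only [pow_zero, pow_one]; linarith
  | succ n ih =>
    have hsq (S : E →L[ℝ] E) : S ^ 2 ^ (n + 1) = (S ^ 2 ^ n) ^ 2 := by rw [pow_succ, pow_mul]
    have step := norm_sq_add_star_sq_le (S := P ^ 2 ^ n) (by simpa [← hsq] using h n n.lt_succ_self)
    rw [star_pow, ← hsq, ← hsq] at step
    calc ‖P ^ 2 ^ (n + 1) + star P ^ 2 ^ (n + 1)‖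
        ≤ ‖P ^ 2 ^ n + star P ^ 2 ^ n‖ ^ 2 / 2 := step
      _ ≤ (2 * (‖P + star P‖ / 2) ^ 2 ^ n) ^ 2 / 2 := by
          gcongr
          exact ih fun j hj => h j (by omega)
      _ = 2 * (‖P + star P‖ / 2) ^ 2 ^ (n + 1) := by rw [pow_succ 2 n, pow_mul]; ring

end ContinuousLinearMap

lemma half_le_one_sub_inv_pow (m : ℕ) : 1 / 2 ≤ (1 - 1 / (2 * 2 ^ m : ℝ)) ^ 2 ^ m := by
  have hm : (1 : ℝ) ≤ 2 ^ m := one_le_pow₀ one_le_two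
  have hε : 1 / (2 * 2 ^ m : ℝ) ≤ 2 := by
    rw [div_le_iff₀ (by positivity)]
    linarith
  calc (1 / 2 : ℝ) = 1 + ((2 ^ m : ℕ) : ℝ) * -(1 / (2 * 2 ^ m)) := by
        push_cast
        field_simp
        ring
    _ ≤ (1 + -(1 / (2 * 2 ^ m))) ^ 2 ^ m := one_add_mul_le_pow (by linarith) _
    _ = (1 - 1 / (2 * 2 ^ m : ℝ)) ^ 2 ^ m := by rw [← sub_eq_add_neg]

lemma one_sub_le_one_add_mul_sq_pow {m j : ℕ} (hj : j < m) {a : ℝ}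
    (ha : a = 1 - 1 / (2 * 2 ^ m)) : 1 - a ≤ (1 + a) * (a * a) ^ 2 ^ (j + 1) := by
  have hm : (2 : ℝ) ≤ 2 ^ m := by
    simpa using pow_le_pow_right₀ one_le_two (Nat.one_le_of_lt hj)
  have hε : 1 / (2 * 2 ^ m : ℝ) ≤ 1 / 4 := by
    rw [div_le_div_iff₀ (by positivity) (by norm_num)]
    linarith
  have ha₀ : 0 ≤ a := by rw [ha]; linarith
  have ha₁ : a ≤ 1 := by rw [ha]; linarith [show (0 : ℝ) < 1 / (2 * 2 ^ m) by positivity]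
  have hhalf := half_le_one_sub_inv_pow m
  rw [← ha] at hhalf
  have hquarter : 1 / 4 ≤ (a * a) ^ 2 ^ (j + 1) :=
    calc (1 / 4 : ℝ) ≤ (a ^ 2 ^ m) ^ 2 := by nlinarith
      _ = (a * a) ^ 2 ^ m := by rw [mul_pow, sq]
      _ ≤ (a * a) ^ 2 ^ (j + 1) :=
        pow_le_pow_of_le_one (by positivity) (by nlinarith) (Nat.pow_le_pow_right two_pos hj)
  nlinarith

namespace Matrix

open scoped ComplexOrder

variable {n 𝕜 : Type*} [RCLike 𝕜] [Fintype n] [DecidableEq n]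

lemma isPositive_toEuclideanCLM_iff {A : Matrix n n 𝕜} :
    (toEuclideanCLM (𝕜 := 𝕜) A).IsPositive ↔ A.PosSemidef := by
  rw [← ContinuousLinearMap.isPositive_toLinearMap_iff, coe_toEuclideanCLM_eq_toEuclideanLin,
    isPositive_toEuclideanLin_iff]

lemma toEuclideanCLM_mem_Icc {A : Matrix n n ℝ} {a : ℝ} (h₀ : (A - a • 1).PosSemidef)
    (h₁ : (1 - A).PosSemidef) : toEuclideanCLM (𝕜 := ℝ) A ∈ Set.Icc (a • 1) 1 := by
  rw [Set.mem_Icc, ContinuousLinearMap.le_def, ContinuousLinearMap.le_def,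
    ← map_one (toEuclideanCLM (𝕜 := ℝ) (n := n)), ← map_smul, ← map_sub, ← map_sub,
    isPositive_toEuclideanCLM_iff, isPositive_toEuclideanCLM_iff]
  exact ⟨h₀, h₁⟩

open scoped MatrixOrder in
lemma exists_isSelfAdjoint_mul_self_eq_toEuclideanCLM {A : Matrix n n 𝕜} (hA : A.PosSemidef) :
    ∃ ρ, IsSelfAdjoint ρ ∧ ρ * ρ = toEuclideanCLM (𝕜 := 𝕜) A := by
  refine ⟨toEuclideanCLM (𝕜 := 𝕜) (CFC.sqrt A), ?_, ?_⟩
  · exact (isPositive_toEuclideanCLM_iff.2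
      (nonneg_iff_posSemidef.1 (CFC.sqrt_nonneg A))).isSelfAdjoint
  · rw [← map_mul, CFC.sqrt_mul_sqrt_self A hA.nonneg]

end Matrix

theorem statement1_general (m d : ℕ)
    (A B : Matrix (Fin d) (Fin d) ℝ)
    (hA1 : (A - (1 - 1 / (2 * (2 ^ m : ℝ))) • 1).PosSemidef)
    (hA2 : ((1 : Matrix (Fin d) (Fin d) ℝ) - A).PosSemidef)
    (hB1 : (B - (1 - 1 / (2 * (2 ^ m : ℝ))) • 1).PosSemidef)
    (hB2 : ((1 : Matrix (Fin d) (Fin d) ℝ) - B).PosSemidef) :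
    (1 / 2 : ℝ) * specNorm ((A * B) ^ (2 ^ m) + (B * A) ^ (2 ^ m)) ≤
      specNorm ((1 / 2 : ℝ) • (A * B + B * A)) ^ (2 ^ m) := by
  set a : ℝ := 1 - 1 / (2 * (2 ^ m : ℝ)) with ha
  have ha₀ : 0 < a := by
    have : 1 / (2 * 2 ^ m : ℝ) ≤ 1 / 2 := by
      gcongr
      exact le_mul_of_one_le_right zero_le_two (one_le_pow₀ one_le_two)
    linarith
  have ha₁ : a ≤ 1 := by simp only [ha, sub_le_self_iff]; positivity
  set T := Matrix.toEuclideanCLM (𝕜 := ℝ) A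
  set U := Matrix.toEuclideanCLM (𝕜 := ℝ) B
  have hT : T ∈ Set.Icc (a • 1) 1 := Matrix.toEuclideanCLM_mem_Icc hA1 hA2
  have hU : U ∈ Set.Icc (a • 1) 1 := Matrix.toEuclideanCLM_mem_Icc hB1 hB2
  obtain ⟨ρ, hρ, hρT⟩ := Matrix.exists_isSelfAdjoint_mul_self_eq_toEuclideanCLM
    (by simpa using hA1.add (Matrix.PosSemidef.one.smul ha₀.le))
  have key := ContinuousLinearMap.norm_pow_two_pow_add_star_le (T * U) m fun j hj =>
    ContinuousLinearMap.inner_mul_pow_two_pow_apply_self_nonneg hρ hρT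
      (ContinuousLinearMap.surjective_of_smul_one_le ha₀ hT.1) ha₀.le ha₁ ha₀.le hT hU
      (one_sub_le_one_add_mul_sq_pow hj ha)
  have hstar : star (T * U) = U * T := by
    rw [star_mul, (ContinuousLinearMap.isSelfAdjoint_of_le hT.2 (.one _)).star_eq,
      (ContinuousLinearMap.isSelfAdjoint_of_le hU.2 (.one _)).star_eq]
  rw [hstar] at key
  simp only [specNorm, map_add, map_pow, map_mul, map_smul, norm_smul,
    Real.norm_of_nonneg (one_div_nonneg.2 zero_le_two), one_div_mul_eq_div]
  linarith

/-- For K = 2^m (m ≥ 1) and symmetric positive definite A, B with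
(1 - 1/(2K)) I ⪯ A ⪯ I and (1 - 1/(2K)) I ⪯ B ⪯ I, we have
(1/2)‖(AB)^K + (BA)^K‖ ≤ ‖(1/2)(AB + BA)‖^K. -/
theorem statement1 (m d : ℕ) (hm : 1 ≤ m) (hd : 1 ≤ d)
    (A B : Matrix (Fin d) (Fin d) ℝ) (hA : A.PosDef) (hB : B.PosDef)
    (hA1 : (A - (1 - 1 / (2 * (2 ^ m : ℝ))) • 1).PosSemidef)
    (hA2 : ((1 : Matrix (Fin d) (Fin d) ℝ) - A).PosSemidef)
    (hB1 : (B - (1 - 1 / (2 * (2 ^ m : ℝ))) • 1).PosSemidef)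
    (hB2 : ((1 : Matrix (Fin d) (Fin d) ℝ) - B).PosSemidef) :
    (1 / 2 : ℝ) * specNorm ((A * B) ^ (2 ^ m) + (B * A) ^ (2 ^ m)) ≤
      specNorm ((1 / 2 : ℝ) • (A * B + B * A)) ^ (2 ^ m) :=
  statement1_general m d A B hA1 hA2 hB1 hB2
end

section
/- For any real symmetric positive semidefinite 2×2 matrices A and B and any integer K ≥ 1, it holds that (1/2) ‖(AB)^K + (BA)^K‖ ≤ ‖(1/2)(AB + BA)‖^K. -/
open Matrix
open scoped Matrix.Norms.L2Operator MatrixOrder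

theorem specNorm_eq_norm {n : ℕ} (X : Matrix (Fin n) (Fin n) ℝ) : specNorm X = ‖X‖ := rfl

theorem Matrix.IsHermitian.specNorm_smul_add_smul_one {n : ℕ} {S : Matrix (Fin n) (Fin n) ℝ}
    (hS : S.IsHermitian) (a b : ℝ) :
    specNorm (a • S + b • 1) = ‖fun i ↦ a * hS.eigenvalues i + b‖ := by
  have hdiag : a • S + b • 1 = Unitary.conjStarAlgAut ℝ _ hS.eigenvectorUnitary
      (diagonal fun i ↦ a * hS.eigenvalues i + b) := by
    conv_lhs => rw [hS.spectral_theorem]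
    rw [← map_smul, ← map_one (Unitary.conjStarAlgAut ℝ _ hS.eigenvectorUnitary), ← map_smul,
      ← map_add]
    congr 1
    ext i j
    by_cases h : i = j <;> simp [h]
  rw [specNorm_eq_norm, hdiag, Unitary.conjStarAlgAut_apply,
    CStarRing.norm_mul_mem_unitary _ (Unitary.star_mem (SetLike.coe_mem _)),
    CStarRing.norm_coe_unitary_mul, l2_opNorm_diagonal]

theorem Matrix.IsHermitian.eigenvalues_le_specNorm {n : ℕ} {S : Matrix (Fin n) (Fin n) ℝ}
    (hS : S.IsHermitian) (i : Fin n) : hS.eigenvalues i ≤ specNorm S := by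
  have h := hS.specNorm_smul_add_smul_one 1 0
  simp only [one_smul, zero_smul, add_zero, one_mul] at h
  exact h ▸ (le_abs_self _).trans (norm_le_pi_norm hS.eigenvalues i)

theorem Matrix.IsHermitian.eigenvalues_fin_two {S : Matrix (Fin 2) (Fin 2) ℝ}
    (hS : S.IsHermitian) :
    hS.eigenvalues 0 + hS.eigenvalues 1 = S.trace ∧
      hS.eigenvalues 0 * hS.eigenvalues 1 = S.det := by
  simpa [Fin.sum_univ_two, Fin.prod_univ_two] using
    And.intro hS.trace_eq_sum_eigenvalues.symm hS.det_eq_prod_eigenvalues.symm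

theorem Matrix.PosSemidef.exists_nonneg_trace_det_mul {n : Type*} [Fintype n] [DecidableEq n]
    {A B : Matrix n n ℝ} (hA : A.PosSemidef) (hB : B.PosSemidef) :
    ∃ ν : n → ℝ, (∀ i, 0 ≤ ν i) ∧ (A * B).trace = ∑ i, ν i ∧ (A * B).det = ∏ i, ν i := by
  set X := CFC.sqrt A
  have hXX : X * X = A := CFC.sqrt_mul_sqrt_self A hA.nonneg
  have hX : Xᴴ = X := (CFC.sqrt_nonneg A).posSemidef.isHermitian
  have hC : (X * B * X).PosSemidef := by
    simpa only [hX] using hB.conjTranspose_mul_mul_same X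
  have htrace : (X * B * X).trace = ∑ i, hC.isHermitian.eigenvalues i := by
    simpa using hC.isHermitian.trace_eq_sum_eigenvalues
  have hdet : (X * B * X).det = ∏ i, hC.isHermitian.eigenvalues i := by
    simpa using hC.isHermitian.det_eq_prod_eigenvalues
  refine ⟨hC.isHermitian.eigenvalues, hC.eigenvalues_nonneg, ?_, ?_⟩
  · rw [← htrace, ← hXX, Matrix.mul_assoc, trace_mul_comm, Matrix.mul_assoc]
  · rw [← hdet, ← hXX, det_mul, det_mul, det_mul, det_mul]
    ring

theorem Matrix.sq_eq_trace_smul_sub_det_smul {R : Type*} [CommRing R] [Nontrivial R]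
    (M : Matrix (Fin 2) (Fin 2) R) : M ^ 2 = M.trace • M - M.det • 1 := by
  have h := M.aeval_self_charpoly
  rw [charpoly_fin_two] at h
  simp only [map_add, map_sub, map_pow, map_mul, Polynomial.aeval_X, Polynomial.aeval_C,
    Algebra.algebraMap_eq_smul_one, smul_mul_assoc, one_mul] at h
  rw [← sub_eq_zero, ← h]
  abel

section SymmetricPart

variable {n : Type*} (M : Matrix n n ℝ)

theorem Matrix.isHermitian_half_smul_add_conjTranspose :
    ((1 / 2 : ℝ) • (M + Mᴴ)).IsHermitian := by
  rw [IsHermitian, conjTranspose_smul, conjTranspose_add, conjTranspose_conjTranspose,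
    star_trivial, add_comm]

theorem Matrix.trace_half_smul_add_conjTranspose [Fintype n] :
    ((1 / 2 : ℝ) • (M + Mᴴ)).trace = M.trace := by
  rw [trace_smul, trace_add, trace_conjTranspose, star_trivial, smul_eq_mul]
  ring

end SymmetricPart

theorem Matrix.det_half_smul_add_conjTranspose_le (M : Matrix (Fin 2) (Fin 2) ℝ) :
    ((1 / 2 : ℝ) • (M + Mᴴ)).det ≤ M.det := by
  simp only [det_fin_two, smul_apply, add_apply, conjTranspose_apply, star_trivial, smul_eq_mul]
  nlinarith [sq_nonneg (M 0 1 - M 1 0)]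

noncomputable def quadRemainder (t d : ℝ) : ℕ → ℝ × ℝ
  | 0 => (0, 1)
  | K + 1 => (t * (quadRemainder t d K).1 + (quadRemainder t d K).2,
      -(d * (quadRemainder t d K).1))

theorem pow_eq_quadRemainder {R : Type*} [Ring R] [Algebra ℝ R] {t d : ℝ} {x : R}
    (hx : x ^ 2 = t • x - d • 1) (K : ℕ) :
    x ^ K = (quadRemainder t d K).1 • x + (quadRemainder t d K).2 • 1 := by
  induction K with
  | zero => simp [quadRemainder]
  | succ K ih =>
    rw [pow_succ, ih, add_mul, smul_mul_assoc, smul_mul_assoc, one_mul, ← sq, hx]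
    simp only [quadRemainder]
    module

theorem quadRemainder_eval_eq_pow (a b : ℝ) (K : ℕ) :
    (quadRemainder (a + b) (a * b) K).1 * a + (quadRemainder (a + b) (a * b) K).2 = a ^ K := by
  have h := pow_eq_quadRemainder (x := a) (t := a + b) (d := a * b) (by simp; ring) K
  simp only [smul_eq_mul, mul_one] at h
  linarith

section QuadRemainder

variable {a b : ℝ}

theorem quadRemainder_fst_nonneg (ha : 0 ≤ a) (hb : 0 ≤ b) (K : ℕ) :
    0 ≤ (quadRemainder (a + b) (a * b) K).1 := by
  induction K with
  | zero => simp [quadRemainder]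
  | succ K ih =>
    have h := quadRemainder_eval_eq_pow a b K
    simp only [quadRemainder]
    nlinarith [pow_nonneg ha K]

theorem quadRemainder_eval_le_pow (ha : 0 ≤ a) (hb : 0 ≤ b) {x : ℝ} (hx : 0 ≤ x)
    (hxab : 0 ≤ (x - a) * (x - b)) (K : ℕ) :
    (quadRemainder (a + b) (a * b) K).1 * x + (quadRemainder (a + b) (a * b) K).2 ≤ x ^ K := by
  induction K with
  | zero => simp [quadRemainder]
  | succ K ih =>
    have hq := quadRemainder_fst_nonneg ha hb K
    simp only [quadRemainder]
    rw [pow_succ]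
    nlinarith [mul_le_mul_of_nonneg_right ih hx, mul_nonneg hq hxab]

theorem abs_quadRemainder_eval_le_max_pow (ha : 0 ≤ a) (hb : 0 ≤ b) {s s' : ℝ}
    (hsum : s + s' = a + b) (hprod : s * s' ≤ a * b) (K : ℕ) :
    |(quadRemainder (a + b) (a * b) K).1 * s + (quadRemainder (a + b) (a * b) K).2|
        ≤ max s s' ^ K ∧
      |(quadRemainder (a + b) (a * b) K).1 * s' + (quadRemainder (a + b) (a * b) K).2|
        ≤ max s s' ^ K := by
  wlog hs : s' ≤ s generalizing s s'
  · rw [max_comm, and_comm]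
    exact this (by linarith) (by linarith) (by linarith)
  rw [max_eq_left hs]
  have hpb := quadRemainder_eval_eq_pow b a K
  rw [add_comm b a, mul_comm b a] at hpb
  set q := (quadRemainder (a + b) (a * b) K).1
  set p := (quadRemainder (a + b) (a * b) K).2
  have hq : 0 ≤ q := quadRemainder_fst_nonneg ha hb K
  have hpa : q * a + p = a ^ K := quadRemainder_eval_eq_pow a b K
  have hsab : 0 ≤ (s - a) * (s - b) := by nlinarith
  have has : a ≤ s := by nlinarith
  have hbs : b ≤ s := by nlinarith
  have hs'b : s' ≤ b := by linarith
  have hs_le : q * s + p ≤ s ^ K := quadRemainder_eval_le_pow ha hb (ha.trans has) hsab K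
  have hs_ge : a ^ K ≤ q * s + p := by nlinarith [mul_le_mul_of_nonneg_left has hq]
  have hs'_le : q * s' + p ≤ b ^ K := by nlinarith [mul_le_mul_of_nonneg_left hs'b hq]
  have hs'_eq : q * s' + p = a ^ K + b ^ K - (q * s + p) := by
    rw [← hpa, ← hpb]
    linear_combination q * hsum
  have haK : 0 ≤ a ^ K := pow_nonneg ha K
  have hbK : 0 ≤ b ^ K := pow_nonneg hb K
  have hbK_le : b ^ K ≤ s ^ K := pow_le_pow_left₀ hb hbs K
  refine ⟨abs_le.mpr ⟨?_, ?_⟩, abs_le.mpr ⟨?_, ?_⟩⟩ <;> linarith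

end QuadRemainder

theorem Matrix.half_mul_specNorm_pow_add_conjTranspose_pow_le (M : Matrix (Fin 2) (Fin 2) ℝ)
    {a b : ℝ} (ha : 0 ≤ a) (hb : 0 ≤ b) (htr : M.trace = a + b) (hdet : M.det = a * b)
    (K : ℕ) :
    (1 / 2 : ℝ) * specNorm (M ^ K + Mᴴ ^ K) ≤ specNorm ((1 / 2 : ℝ) • (M + Mᴴ)) ^ K := by
  set S := (1 / 2 : ℝ) • (M + Mᴴ)
  have hS : S.IsHermitian := M.isHermitian_half_smul_add_conjTranspose
  obtain ⟨hσsum, hσprod⟩ := hS.eigenvalues_fin_two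
  rw [M.trace_half_smul_add_conjTranspose, htr] at hσsum
  replace hσprod := hσprod.trans_le (M.det_half_smul_add_conjTranspose_le.trans hdet.le)
  set σ := hS.eigenvalues
  set r := quadRemainder (a + b) (a * b) K
  have hZ : M ^ K + Mᴴ ^ K = (2 : ℝ) • (r.1 • S + r.2 • 1) := by
    have hM := M.sq_eq_trace_smul_sub_det_smul
    have hM' := Mᴴ.sq_eq_trace_smul_sub_det_smul
    rw [trace_conjTranspose, det_conjTranspose, star_trivial, star_trivial] at hM'
    rw [htr, hdet] at hM hM'
    rw [pow_eq_quadRemainder hM K, pow_eq_quadRemainder hM' K]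
    module
  obtain ⟨h0, h1⟩ := abs_quadRemainder_eval_le_max_pow ha hb hσsum hσprod K
  have hmax : max (σ 0) (σ 1) ≤ specNorm S :=
    max_le (hS.eigenvalues_le_specNorm 0) (hS.eigenvalues_le_specNorm 1)
  calc (1 / 2 : ℝ) * specNorm (M ^ K + Mᴴ ^ K) = ‖fun i ↦ r.1 * σ i + r.2‖ := by
        rw [hZ, specNorm_eq_norm, norm_smul, ← specNorm_eq_norm, hS.specNorm_smul_add_smul_one,
          Real.norm_two]
        ring
    _ ≤ max (σ 0) (σ 1) ^ K :=
        (pi_norm_le_iff_of_nonneg ((abs_nonneg _).trans h0)).mpr (Fin.forall_fin_two.mpr ⟨h0, h1⟩)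
    _ ≤ specNorm S ^ K :=
        pow_le_pow_left₀ (by linarith [le_max_left (σ 0) (σ 1), le_max_right (σ 0) (σ 1)]) hmax K

theorem statement2_general (A B : Matrix (Fin 2) (Fin 2) ℝ) (hA : A.PosSemidef) (hB : B.PosSemidef)
    (K : ℕ) :
    (1 / 2 : ℝ) * specNorm ((A * B) ^ K + (B * A) ^ K) ≤
      specNorm ((1 / 2 : ℝ) • (A * B + B * A)) ^ K := by
  obtain ⟨ν, hν, htr, hdet⟩ := hA.exists_nonneg_trace_det_mul hB
  rw [Fin.sum_univ_two] at htr
  rw [Fin.prod_univ_two] at hdet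
  have hBA : B * A = (A * B)ᴴ := by
    rw [conjTranspose_mul, hA.isHermitian.eq, hB.isHermitian.eq]
  rw [hBA]
  exact (A * B).half_mul_specNorm_pow_add_conjTranspose_pow_le (hν 0) (hν 1) htr hdet K

/-- For symmetric positive semidefinite 2×2 matrices A, B and K ≥ 1,
(1/2)‖(AB)^K + (BA)^K‖ ≤ ‖(1/2)(AB + BA)‖^K. -/
theorem statement2 (A B : Matrix (Fin 2) (Fin 2) ℝ) (hA : A.PosSemidef) (hB : B.PosSemidef)
    (K : ℕ) (hK : 1 ≤ K) :
    (1 / 2 : ℝ) * specNorm ((A * B) ^ K + (B * A) ^ K) ≤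
      specNorm ((1 / 2 : ℝ) • (A * B + B * A)) ^ K :=
  statement2_general A B hA hB K
end

section
/- Let n ≥ 2 and K ≥ 1, and let M_1, …, M_n be real symmetric d×d matrices. There exist a constant C ≥ 0 and η_0 > 0 (depending on n, K, and the M_i) such that for every η ∈ [0, η_0], the matrices A_i := I − η M_i satisfy W_RS(n,K,A_1,…,A_n) − W_SS(n,K,A_1,…,A_n) ⪰ −(η^4 K(K−1)/(4n·n!)) Σ_{i,j ∈ [n], i ≠ j} (M_i M_j − M_j M_i)^2 − C η^5 I. -/
/-- Ordered product `A (σ 1) * A (σ 2) * ⋯ * A (σ n)` (increasing index order). -/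
noncomputable def permProd {n d : ℕ} (A : Fin n → Matrix (Fin d) (Fin d) ℝ)
    (σ : Equiv.Perm (Fin n)) : Matrix (Fin d) (Fin d) ℝ :=
  (List.ofFn fun i => A (σ i)).prod

/-- Single-shuffle mean: `(1/n!) Σ_σ (Π_i A_{σ(i)})^K`. -/
noncomputable def WSS (n K : ℕ) {d : ℕ} (A : Fin n → Matrix (Fin d) (Fin d) ℝ) :
    Matrix (Fin d) (Fin d) ℝ :=
  ((n.factorial : ℝ)⁻¹) • ∑ σ : Equiv.Perm (Fin n), (permProd A σ) ^ K

/-- Random-reshuffle mean: `((1/n!) Σ_σ Π_i A_{σ(i)})^K`. -/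
noncomputable def WRS (n K : ℕ) {d : ℕ} (A : Fin n → Matrix (Fin d) (Fin d) ℝ) :
    Matrix (Fin d) (Fin d) ℝ :=
  (((n.factorial : ℝ)⁻¹) • ∑ σ : Equiv.Perm (Fin n), permProd A σ) ^ K

/-- GD mean: `((1/n) Σ_i A_i)^(nK)`. -/
noncomputable def WGD (n K : ℕ) {d : ℕ} (A : Fin n → Matrix (Fin d) (Fin d) ℝ) :
    Matrix (Fin d) (Fin d) ℝ :=
  (((n : ℝ)⁻¹) • ∑ i : Fin n, A i) ^ (n * K)

/-!
Write `P_σ(η) = ∏ᵢ (1 - η M_{σ(i)})` and `W(η)` for its mean over `σ`. Expanding the product,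
`P_σ = 1 - η ∑ᵢ Mᵢ + η² S_σ + O(η³)` with `S_σ = ∑_{i<j} M_{σ(i)} M_{σ(j)}`, so
`D_σ := P_σ - W = η² V_σ + O(η³)` where `V_σ = S_σ - mean S`. In `P_σ^K = (W + D_σ)^K` the terms
linear in `D_σ` average to zero, and each of the `K(K-1)/2` quadratic terms is
`η⁴ V_σ² + O(η⁵)`; hence `W_SS - W_RS = (K(K-1)/2) η⁴ mean(V_σ²) + O(η⁵)`.

Since `S_σ + S_σᵀ = (∑ Mᵢ)² - ∑ Mᵢ²` does not depend on `σ`, every `V_σ` is skew, so `V_σ² ⪯ 0`.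
Swapping the first two positions of `σ` changes `V_σ` by the commutator `[M_{σ(0)}, M_{σ(1)}]`,
and `2(a² + b²) ⪯ (a - b)²` for skew `a, b` gives
`4 ∑_σ V_σ² ⪯ ∑_σ [M_{σ(0)}, M_{σ(1)}]² ⪯ ∑_{i≠j} [Mᵢ, Mⱼ]²`.
The `O(η⁵)` remainder is symmetric and is absorbed by `C η⁵ I`.
-/

open Finset Asymptotics Filter Topology

section PairSum

variable {R : Type*} [Ring R]

/-- `pairSum [a₁, …, aₖ] = ∑_{i<j} aᵢ * aⱼ`. -/
def pairSum : List R → R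
  | [] => 0
  | a :: l => a * l.sum + pairSum l

theorem pairSum_cons_cons_sub_pairSum_cons_cons (a b : R) (l : List R) :
    pairSum (a :: b :: l) - pairSum (b :: a :: l) = a * b - b * a := by
  simp only [pairSum, List.sum_cons]
  noncomm_ring

theorem pairSum_add_star_pairSum [StarRing R] {l : List R} (hl : ∀ a ∈ l, IsSelfAdjoint a) :
    pairSum l + star (pairSum l) = l.sum ^ 2 - (l.map (· ^ 2)).sum := by
  induction l with
  | nil => simp [pairSum]
  | cons a l ih =>
    simp only [List.mem_cons, forall_eq_or_imp] at hl
    have hsum : star l.sum = l.sum :=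
      (List.sum_induction IsSelfAdjoint (fun _ _ => IsSelfAdjoint.add) (.zero _) hl.2).star_eq
    simp only [pairSum, List.sum_cons, List.map_cons, star_add, star_mul, hsum, hl.1.star_eq]
    linear_combination (norm := noncomm_ring) ih hl.2

end PairSum

section Telescoping

variable {R : Type*} [Ring R]

theorem pow_sub_pow_eq_sum_mul_sub_mul (x y : R) (k : ℕ) :
    x ^ k - y ^ k = ∑ j ∈ range k, x ^ j * (x - y) * y ^ (k - 1 - j) := by
  induction k with
  | zero => simp
  | succ k ih =>
    have hterm (j : ℕ) : x ^ (j + 1) * (x - y) * y ^ (k - (j + 1)) =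
        x * (x ^ j * (x - y) * y ^ (k - 1 - j)) := by
      rw [pow_succ', Nat.sub_succ', Nat.sub_right_comm, mul_assoc, mul_assoc, mul_assoc]
    rw [sum_range_succ', Nat.add_sub_cancel, Nat.sub_zero, sum_congr rfl fun j _ => hterm j,
      ← mul_sum, ← ih, pow_succ' x, pow_succ' y]
    noncomm_ring

theorem pow_sub_pow_sub_sum_eq_sum_sum (x y : R) (k : ℕ) :
    x ^ k - y ^ k - ∑ j ∈ range k, y ^ j * (x - y) * y ^ (k - 1 - j) =
      ∑ j ∈ range k, ∑ l ∈ range j,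
        x ^ l * (x - y) * y ^ (j - 1 - l) * (x - y) * y ^ (k - 1 - j) := by
  rw [pow_sub_pow_eq_sum_mul_sub_mul, ← sum_sub_distrib]
  refine sum_congr rfl fun j _ => ?_
  rw [← sub_mul, ← sub_mul, pow_sub_pow_eq_sum_mul_sub_mul, sum_mul, sum_mul]

theorem sum_range_natCast (K : ℕ) : ∑ j ∈ range K, (j : ℝ) = K * (K - 1) / 2 := by
  induction K with
  | zero => simp
  | succ K ih => rw [sum_range_succ, ih]; push_cast; ring

end Telescoping

section Asymptotics

theorem isBigO_pow_pow_of_le {m k : ℕ} (h : m ≤ k) :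
    (fun η : ℝ => η ^ k) =O[𝓝 0] fun η => η ^ m := by
  rcases h.lt_or_eq with h | rfl
  · exact (isLittleO_pow_pow h).isBigO
  · exact isBigO_refl _ _

theorem isBigO_pow_id {k : ℕ} (hk : 1 ≤ k) : (fun η : ℝ => η ^ k) =O[𝓝 0] fun η => η :=
  (isBigO_pow_pow_of_le hk).congr_right pow_one

variable {R : Type*} [NormedRing R]

theorem isBigO_one_of_sub_one_isBigO {f : ℝ → R} (h : (fun η => f η - 1) =O[𝓝 0] fun η => η) :
    f =O[𝓝 0] fun _ => (1 : ℝ) :=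
  ((h.trans ((continuous_id.tendsto 0).isBigO_one ℝ)).add (isBigO_const_one ℝ 1 _)).congr_left
    fun η => sub_add_cancel (f η) 1

theorem pow_sub_one_isBigO {f : ℝ → R} (h : (fun η => f η - 1) =O[𝓝 0] fun η => η) (m : ℕ) :
    (fun η => f η ^ m - 1) =O[𝓝 0] fun η => η := by
  induction m with
  | zero => simpa using isBigO_zero _ _
  | succ m ih =>
    refine (((ih.mul (isBigO_one_of_sub_one_isBigO h)).congr_right fun η => mul_one η).add
      h).congr_left fun η => ?_
    rw [pow_succ]
    noncomm_ring

variable [NormedAlgebra ℝ R]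

theorem isBigO_smul_const {α : Type*} {l : Filter α} (f : α → ℝ) (v : R) :
    (fun x => f x • v) =O[l] f :=
  ((isBigO_refl f l).smul (isBigO_const_one ℝ v l)).congr_right fun x => by simp

theorem prod_map_one_sub_smul_sub_isBigO (l : List R) :
    (fun η : ℝ => (l.map fun a => 1 - η • a).prod - (1 - η • l.sum + η ^ 2 • pairSum l))
      =O[𝓝 0] fun η => η ^ 3 := by
  induction l with
  | nil => simpa [pairSum] using isBigO_zero _ _
  | cons a l ih =>
    have hfactor : (fun η : ℝ => 1 - η • a) =O[𝓝 0] fun _ => (1 : ℝ) :=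
      ((continuous_const.sub (continuous_id.smul continuous_const)).tendsto 0).isBigO_one ℝ
    refine (((hfactor.mul ih).congr_right fun η => one_mul _).sub
      (isBigO_smul_const (· ^ 3) (a * pairSum l))).congr (fun η => ?_) fun η => rfl
    simp only [List.map_cons, List.prod_cons, List.sum_cons, pairSum, mul_sub, sub_mul, mul_add,
      one_mul, mul_one, smul_mul_assoc, mul_smul_comm, smul_sub, smul_add, smul_smul]
    module

theorem mul_mul_mul_mul_sub_isBigO {a b c e : ℝ → R} {v : R}
    (ha : (fun η => a η - 1) =O[𝓝 0] fun η => η) (hb : (fun η => b η - 1) =O[𝓝 0] fun η => η)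
    (hc : (fun η => c η - 1) =O[𝓝 0] fun η => η)
    (he : (fun η => e η - η ^ 2 • v) =O[𝓝 0] fun η => η ^ 3) :
    (fun η => a η * e η * b η * e η * c η - η ^ 4 • v ^ 2) =O[𝓝 0] fun η => η ^ 5 := by
  have hv := isBigO_smul_const (l := 𝓝 0) (· ^ 2) v
  have he2 : e =O[𝓝 0] fun η => η ^ 2 :=
    ((he.trans (isBigO_pow_pow_of_le (by norm_num))).add hv).congr_left fun η => sub_add_cancel _ _
  have hb1 := isBigO_one_of_sub_one_isBigO hb
  have hc1 := isBigO_one_of_sub_one_isBigO hc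
  have hsplit (η : ℝ) : a η * e η * b η * e η * c η - η ^ 4 • v ^ 2 =
      (a η - 1) * (e η * b η * e η * c η) + e η * (b η - 1) * (e η * c η) +
        e η * e η * (c η - 1) + (e η - η ^ 2 • v) * e η + η ^ 2 • v * (e η - η ^ 2 • v) := by
    rw [show η ^ 4 • v ^ 2 = η ^ 2 • v * η ^ 2 • v by rw [smul_mul_smul_comm, ← pow_add, sq]]
    noncomm_ring
  have t1 := (ha.mul (((he2.mul hb1).mul he2).mul hc1)).congr_right (g₂ := fun η => η ^ 5)
    fun η => by ring
  have t2 := ((he2.mul hb).mul (he2.mul hc1)).congr_right (g₂ := fun η => η ^ 5)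
    fun η => by ring
  have t3 := ((he2.mul he2).mul hc).congr_right (g₂ := fun η => η ^ 5) fun η => by ring
  have t4 := (he.mul he2).congr_right (g₂ := fun η => η ^ 5) fun η => by ring
  have t5 := (hv.mul he).congr_right (g₂ := fun η => η ^ 5) fun η => by ring
  exact ((((t1.add t2).add t3).add t4).add t5).congr_left fun η => (hsplit η).symm

theorem sum_pow_sub_card_smul_pow_sub_isBigO {ι : Type*} [Fintype ι] {x : ι → ℝ → R}
    {w : ℝ → R} {v : ι → R} (K : ℕ) (hw : (fun η => w η - 1) =O[𝓝 0] fun η => η)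
    (hx : ∀ i, (fun η => x i η - w η - η ^ 2 • v i) =O[𝓝 0] fun η => η ^ 3)
    (hsum : ∀ η, ∑ i, (x i η - w η) = 0) :
    (fun η => ∑ i, x i η ^ K - Fintype.card ι • w η ^ K -
      ((K * (K - 1) / 2 : ℝ) * η ^ 4) • ∑ i, v i ^ 2) =O[𝓝 0] fun η => η ^ 5 := by
  have hx1 (i : ι) : (fun η => x i η - 1) =O[𝓝 0] fun η => η :=
    ((((hx i).trans (isBigO_pow_id (by norm_num))).add
      ((isBigO_smul_const (· ^ 2) (v i)).trans (isBigO_pow_id (by norm_num)))).add hw).congr_left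
      fun η => by abel
  have hfirst (η : ℝ) : ∑ i, ∑ j ∈ range K, w η ^ j * (x i η - w η) * w η ^ (K - 1 - j) = 0 := by
    rw [sum_comm]
    exact sum_eq_zero fun j _ => by rw [← sum_mul, ← mul_sum, hsum, mul_zero, zero_mul]
  have hid (η : ℝ) : ∑ i, x i η ^ K - Fintype.card ι • w η ^ K -
      ((K * (K - 1) / 2 : ℝ) * η ^ 4) • ∑ i, v i ^ 2 =
      ∑ i, ∑ j ∈ range K, ∑ l ∈ range j, (x i η ^ l * (x i η - w η) * w η ^ (j - 1 - l) *
        (x i η - w η) * w η ^ (K - 1 - j) - η ^ 4 • v i ^ 2) := by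
    simp only [sum_sub_distrib, ← pow_sub_pow_sub_sum_eq_sum_sum, hfirst, sum_const, card_range,
      card_univ, ← Nat.cast_smul_eq_nsmul ℝ, ← sum_smul, ← smul_sum, smul_smul]
    rw [← sum_mul, sum_range_natCast, sub_zero]
  refine IsBigO.congr_left ?_ fun η => (hid η).symm
  exact IsBigO.fun_sum fun i _ => IsBigO.fun_sum fun j _ => IsBigO.fun_sum fun l _ =>
    mul_mul_mul_mul_sub_isBigO (e := fun η => x i η - w η) (pow_sub_one_isBigO (hx1 i) l)
      (pow_sub_one_isBigO hw _) (pow_sub_one_isBigO hw _) (hx i)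

end Asymptotics

open scoped Matrix.Norms.L2Operator MatrixOrder
open Equiv

theorem star_mul_sub_mul_of_isSelfAdjoint {R : Type*} [Ring R] [StarRing R] {a b : R}
    (ha : IsSelfAdjoint a) (hb : IsSelfAdjoint b) : star (a * b - b * a) = -(a * b - b * a) := by
  rw [star_sub, star_mul, star_mul, ha.star_eq, hb.star_eq, neg_sub]

section StarOrderedRing

variable {A : Type*} [Ring A] [StarRing A] [PartialOrder A] [StarOrderedRing A]

theorem sq_nonpos_of_star_eq_neg {a : A} (ha : star a = -a) : a ^ 2 ≤ 0 := by
  rw [show a ^ 2 = -(a * star a) by rw [ha, mul_neg, neg_neg, sq], neg_nonpos]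
  exact mul_star_self_nonneg a

theorem two_smul_sq_add_sq_le_sq_sub {a b : A} (ha : star a = -a) (hb : star b = -b) :
    2 • (a ^ 2 + b ^ 2) ≤ (a - b) ^ 2 := by
  rw [← sub_nonneg]
  have : (a - b) ^ 2 - 2 • (a ^ 2 + b ^ 2) = (a + b) * star (a + b) := by
    rw [star_add, ha, hb]
    noncomm_ring
  rw [this]
  exact mul_star_self_nonneg _

end StarOrderedRing

section PermMean

variable {n : ℕ} {E : Type*} [AddCommGroup E] [Module ℝ E]

noncomputable def permMean (f : Perm (Fin n) → E) : E :=
  ((n.factorial : ℝ))⁻¹ • ∑ σ, f σ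

theorem permMean_const (c : E) : permMean (fun _ : Perm (Fin n) => c) = c := by
  rw [permMean, sum_const, card_univ, Fintype.card_perm, Fintype.card_fin,
    ← Nat.cast_smul_eq_nsmul ℝ, smul_smul, inv_mul_cancel₀ (by positivity), one_smul]

theorem permMean_sub (f g : Perm (Fin n) → E) :
    permMean (fun σ => f σ - g σ) = permMean f - permMean g := by
  rw [permMean, permMean, permMean, sum_sub_distrib, smul_sub]

theorem permMean_add (f g : Perm (Fin n) → E) :
    permMean (fun σ => f σ + g σ) = permMean f + permMean g := by
  rw [permMean, permMean, permMean, sum_add_distrib, smul_add]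

theorem permMean_smul (c : ℝ) (f : Perm (Fin n) → E) :
    permMean (fun σ => c • f σ) = c • permMean f := by
  rw [permMean, permMean, ← smul_sum, smul_comm]

theorem sum_sub_permMean (f : Perm (Fin n) → E) : ∑ σ, (f σ - permMean f) = 0 := by
  rw [sum_sub_distrib, sum_const, card_univ, Fintype.card_perm, Fintype.card_fin, permMean,
    ← Nat.cast_smul_eq_nsmul ℝ, smul_smul, mul_inv_cancel₀ (by positivity), one_smul, sub_self]

theorem star_permMean [StarAddMonoid E] [StarModule ℝ E] (f : Perm (Fin n) → E) :
    star (permMean f) = permMean (fun σ => star (f σ)) := by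
  rw [permMean, permMean, star_smul, star_sum, star_trivial]

theorem isSelfAdjoint_permMean [StarAddMonoid E] [StarModule ℝ E] {f : Perm (Fin n) → E}
    (τ : Perm (Fin n)) (hf : ∀ σ, star (f σ) = f (σ * τ)) : IsSelfAdjoint (permMean f) := by
  rw [IsSelfAdjoint, star_permMean, funext hf, permMean, permMean]
  exact congrArg _ (Fintype.sum_equiv (Equiv.mulRight τ) _ _ fun _ => rfl)

end PermMean

section TwoPoints

theorem exists_perm_apply_zero_apply_one {m : ℕ} {i j : Fin (m + 2)} (hij : i ≠ j) :
    ∃ σ : Perm (Fin (m + 2)), σ 0 = i ∧ σ 1 = j := by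
  refine ⟨swap 0 i * swap 1 (swap 0 i j), ?_, by simp⟩
  have hj : swap 0 i j ≠ 0 := fun h => hij (by simpa using (congrArg (swap 0 i) h).symm)
  rw [Perm.mul_apply, swap_apply_of_ne_of_ne (by simp) hj.symm, swap_apply_left]

theorem sum_perm_apply_zero_apply_one_le {m : ℕ} {A : Type*} [AddCommMonoid A] [PartialOrder A]
    [IsOrderedAddMonoid A] (g : Fin (m + 2) → Fin (m + 2) → A)
    (hg : ∀ i j, i ≠ j → g i j ≤ 0) :
    ∑ σ : Perm (Fin (m + 2)), g (σ 0) (σ 1) ≤ ∑ i, ∑ j, if i ≠ j then g i j else 0 := by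
  have hex (p : Fin (m + 2) × Fin (m + 2)) :
      ∃ σ : Perm (Fin (m + 2)), p.1 ≠ p.2 → σ 0 = p.1 ∧ σ 1 = p.2 := by
    by_cases hp : p.1 = p.2
    · exact ⟨1, fun h => (h hp).elim⟩
    · exact (exists_perm_apply_zero_apply_one hp).imp fun _ h _ => h
  choose s hs using hex
  set t := univ.filter fun p : Fin (m + 2) × Fin (m + 2) => p.1 ≠ p.2
  have hs' : ∀ p ∈ t, s p 0 = p.1 ∧ s p 1 = p.2 := fun p hp => hs p (mem_filter.1 hp).2
  have hinj : Set.InjOn s t := fun p hp q hq hpq => Prod.ext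
    (by rw [← (hs' p hp).1, ← (hs' q hq).1, hpq]) (by rw [← (hs' p hp).2, ← (hs' q hq).2, hpq])
  calc ∑ σ : Perm (Fin (m + 2)), g (σ 0) (σ 1)
      = ∑ σ ∈ univ \ t.image s, g (σ 0) (σ 1) + ∑ σ ∈ t.image s, g (σ 0) (σ 1) :=
        (sum_sdiff (subset_univ _)).symm
    _ ≤ ∑ σ ∈ t.image s, g (σ 0) (σ 1) :=
        add_le_of_nonpos_left (sum_nonpos fun σ _ => hg _ _ (by simp))
    _ = ∑ p ∈ t, g p.1 p.2 := by
        rw [sum_image hinj]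
        exact sum_congr rfl fun p hp => by rw [(hs' p hp).1, (hs' p hp).2]
    _ = ∑ i, ∑ j, if i ≠ j then g i j else 0 := by
        rw [sum_filter, ← univ_product_univ, sum_product]

end TwoPoints

theorem List.reverse_ofFn {α : Type*} {k : ℕ} (f : Fin k → α) :
    (List.ofFn f).reverse = List.ofFn fun i => f i.rev := by
  refine List.ext_getElem (by simp) fun i h₁ h₂ => ?_
  simp only [List.getElem_reverse, List.getElem_ofFn, List.length_ofFn]
  congr 1
  ext
  simp only [List.length_ofFn] at h₂
  simp only [Fin.val_rev]
  omega

theorem star_permProd {n d : ℕ} {A : Fin n → Matrix (Fin d) (Fin d) ℝ}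
    (hA : ∀ i, IsSelfAdjoint (A i)) (σ : Perm (Fin n)) :
    star (permProd A σ) = permProd A (σ * Fin.revPerm) := by
  rw [permProd, permProd, Matrix.star_eq_conjTranspose, Matrix.conjTranspose_list_prod,
    List.map_ofFn, List.reverse_ofFn]
  simp only [Function.comp_apply, ← Matrix.star_eq_conjTranspose, (hA _).star_eq]
  rfl

theorem isSelfAdjoint_WSS {n d : ℕ} (K : ℕ) {A : Fin n → Matrix (Fin d) (Fin d) ℝ}
    (hA : ∀ i, IsSelfAdjoint (A i)) : IsSelfAdjoint (WSS n K A) :=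
  isSelfAdjoint_permMean Fin.revPerm fun σ => by rw [star_pow, star_permProd hA]

theorem isSelfAdjoint_WRS {n d : ℕ} (K : ℕ) {A : Fin n → Matrix (Fin d) (Fin d) ℝ}
    (hA : ∀ i, IsSelfAdjoint (A i)) : IsSelfAdjoint (WRS n K A) :=
  (isSelfAdjoint_permMean Fin.revPerm (star_permProd hA)).pow K

section Fluctuation

variable {n d : ℕ} (M : Fin n → Matrix (Fin d) (Fin d) ℝ)

/-- The matrix `S_σ` of the sketch; `fluct M σ` is `V_σ`. -/
noncomputable def secondOrder (σ : Perm (Fin n)) : Matrix (Fin d) (Fin d) ℝ :=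
  pairSum (List.ofFn fun i => M (σ i))

noncomputable def fluct (σ : Perm (Fin n)) : Matrix (Fin d) (Fin d) ℝ :=
  secondOrder M σ - permMean (secondOrder M)

variable {M}

theorem secondOrder_add_star (hM : ∀ i, IsSelfAdjoint (M i)) (σ : Perm (Fin n)) :
    secondOrder M σ + star (secondOrder M σ) = (∑ i, M i) ^ 2 - ∑ i, M i ^ 2 := by
  rw [secondOrder, pairSum_add_star_pairSum (by simpa using fun i => hM (σ i)), List.sum_ofFn,
    List.map_ofFn, List.sum_ofFn]
  simp only [Function.comp_def, Equiv.sum_comp σ M, Equiv.sum_comp σ (fun i => M i ^ 2)]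

theorem star_fluct (hM : ∀ i, IsSelfAdjoint (M i)) (σ : Perm (Fin n)) :
    star (fluct M σ) = -fluct M σ := by
  have hstar (τ : Perm (Fin n)) := eq_sub_of_add_eq' (secondOrder_add_star hM τ)
  rw [fluct, star_sub, star_permMean, hstar, funext hstar, permMean_sub, permMean_const]
  abel

theorem isSelfAdjoint_permMean_fluct_sq (hM : ∀ i, IsSelfAdjoint (M i)) :
    IsSelfAdjoint (permMean fun σ => fluct M σ ^ 2) :=
  isSelfAdjoint_permMean 1 fun σ => by rw [mul_one, star_pow, star_fluct hM, neg_sq]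

theorem fluct_sub_fluct_mul_swap {m : ℕ} (M : Fin (m + 2) → Matrix (Fin d) (Fin d) ℝ)
    (σ : Perm (Fin (m + 2))) :
    fluct M σ - fluct M (σ * swap 0 1) = M (σ 0) * M (σ 1) - M (σ 1) * M (σ 0) := by
  have hfix (i : Fin m) : swap (0 : Fin (m + 2)) 1 i.succ.succ = i.succ.succ :=
    swap_apply_of_ne_of_ne (Fin.succ_ne_zero _) (by simp [Fin.ext_iff])
  simp only [fluct, sub_sub_sub_cancel_right, secondOrder, List.ofFn_succ, Perm.mul_apply,
    Fin.succ_zero_eq_one, swap_apply_left, swap_apply_right, hfix]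
  exact pairSum_cons_cons_sub_pairSum_cons_cons _ _ _

theorem four_smul_sum_fluct_sq_le (hM : ∀ i, IsSelfAdjoint (M i)) (hn : 2 ≤ n) :
    4 • ∑ σ, fluct M σ ^ 2 ≤
      ∑ i, ∑ j, if i ≠ j then (M i * M j - M j * M i) ^ 2 else 0 := by
  obtain ⟨m, rfl⟩ : ∃ m, n = m + 2 := ⟨n - 2, by omega⟩
  calc 4 • ∑ σ, fluct M σ ^ 2
      = ∑ σ, 2 • (fluct M σ ^ 2 + fluct M (σ * swap 0 1) ^ 2) := by
        have hswap : ∑ σ, fluct M (σ * swap 0 1) ^ 2 = ∑ σ, fluct M σ ^ 2 :=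
          Fintype.sum_equiv (Equiv.mulRight _) _ _ fun _ => rfl
        rw [← smul_sum, sum_add_distrib, hswap, ← two_nsmul, smul_smul]
        norm_num
    _ ≤ ∑ σ, (fluct M σ - fluct M (σ * swap 0 1)) ^ 2 :=
        sum_le_sum fun σ _ => two_smul_sq_add_sq_le_sq_sub (star_fluct hM σ) (star_fluct hM _)
    _ = ∑ σ : Perm (Fin (m + 2)), (M (σ 0) * M (σ 1) - M (σ 1) * M (σ 0)) ^ 2 := by
        simp only [fluct_sub_fluct_mul_swap]
    _ ≤ _ := sum_perm_apply_zero_apply_one_le (fun i j => (M i * M j - M j * M i) ^ 2)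
        fun i j _ => sq_nonpos_of_star_eq_neg (star_mul_sub_mul_of_isSelfAdjoint (hM i) (hM j))

theorem permMean_fluct_sq_le (hM : ∀ i, IsSelfAdjoint (M i)) (hn : 2 ≤ n) :
    permMean (fun σ => fluct M σ ^ 2) ≤ (2 * n * n.factorial : ℝ)⁻¹ •
      ∑ i, ∑ j, if i ≠ j then (M i * M j - M j * M i) ^ 2 else 0 := by
  set Q := ∑ i, ∑ j, if i ≠ j then (M i * M j - M j * M i) ^ 2 else 0
  have hQ : Q ≤ 0 := sum_nonpos fun i _ => sum_nonpos fun j _ => by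
    split_ifs
    exacts [sq_nonpos_of_star_eq_neg (star_mul_sub_mul_of_isSelfAdjoint (hM i) (hM j)), le_rfl]
  have hfac : (0 : ℝ) < n.factorial := by positivity
  calc permMean (fun σ => fluct M σ ^ 2)
      = (4 * n.factorial : ℝ)⁻¹ • 4 • ∑ σ, fluct M σ ^ 2 := by
        rw [permMean, ← Nat.cast_smul_eq_nsmul ℝ, smul_smul]
        congr 1
        push_cast
        field_simp
    _ ≤ (4 * n.factorial : ℝ)⁻¹ • Q :=
        smul_le_smul_of_nonneg_left (four_smul_sum_fluct_sq_le hM hn) (by positivity)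
    _ ≤ (2 * n * n.factorial : ℝ)⁻¹ • Q := by
        rw [← neg_le_neg_iff, ← smul_neg, ← smul_neg]
        refine smul_le_smul_of_nonneg_right ?_ (neg_nonneg.2 hQ)
        have hn' : (2 : ℝ) ≤ n := by exact_mod_cast hn
        gcongr
        nlinarith

end Fluctuation

section Expansion

variable {n d : ℕ} (M : Fin n → Matrix (Fin d) (Fin d) ℝ)

theorem permProd_one_sub_smul_sub_isBigO (σ : Perm (Fin n)) :
    (fun η : ℝ => permProd (fun i => 1 - η • M i) σ -
      (1 - η • ∑ i, M i + η ^ 2 • secondOrder M σ)) =O[𝓝 0] fun η => η ^ 3 := by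
  have h := prod_map_one_sub_smul_sub_isBigO (List.ofFn fun i => M (σ i))
  simp only [List.map_ofFn, List.sum_ofFn, Equiv.sum_comp σ M] at h
  exact h

theorem permMean_permProd_sub_isBigO :
    (fun η : ℝ => permMean (permProd (fun i => 1 - η • M i)) -
      (1 - η • ∑ i, M i + η ^ 2 • permMean (secondOrder M))) =O[𝓝 0] fun η => η ^ 3 := by
  refine ((IsBigO.fun_sum (s := univ) fun σ _ =>
    permProd_one_sub_smul_sub_isBigO M σ).const_smul_left ((n.factorial : ℝ))⁻¹).congr_left
      fun η => ?_
  change permMean (fun σ => _ - _) = _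
  rw [permMean_sub, permMean_add, permMean_sub, permMean_const, permMean_const, permMean_smul]

theorem permMean_permProd_sub_one_isBigO :
    (fun η : ℝ => permMean (permProd (fun i => 1 - η • M i)) - 1) =O[𝓝 0] fun η => η :=
  ((((permMean_permProd_sub_isBigO M).trans (isBigO_pow_id (by norm_num))).sub
    (isBigO_smul_const _ _)).add ((isBigO_smul_const (· ^ 2) _).trans
      (isBigO_pow_id (by norm_num)))).congr_left fun η => by abel

theorem permProd_sub_permMean_sub_isBigO (σ : Perm (Fin n)) :
    (fun η : ℝ => permProd (fun i => 1 - η • M i) σ - permMean (permProd (fun i => 1 - η • M i)) -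
      η ^ 2 • fluct M σ) =O[𝓝 0] fun η => η ^ 3 :=
  ((permProd_one_sub_smul_sub_isBigO M σ).sub (permMean_permProd_sub_isBigO M)).congr_left
    fun η => by rw [fluct, smul_sub]; abel

theorem WSS_sub_WRS_sub_isBigO (K : ℕ) :
    (fun η : ℝ => WSS n K (fun i => 1 - η • M i) - WRS n K (fun i => 1 - η • M i) -
      ((K * (K - 1) / 2 : ℝ) * η ^ 4) • permMean (fun σ => fluct M σ ^ 2))
      =O[𝓝 0] fun η => η ^ 5 := by
  refine ((sum_pow_sub_card_smul_pow_sub_isBigO K (permMean_permProd_sub_one_isBigO M)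
    (permProd_sub_permMean_sub_isBigO M) fun η => sum_sub_permMean _).const_smul_left
      ((n.factorial : ℝ))⁻¹).congr_left fun η => ?_
  simp only [Pi.smul_apply, Fintype.card_perm, Fintype.card_fin, smul_sub, WSS, WRS]
  rw [← Nat.cast_smul_eq_nsmul ℝ, smul_smul, inv_mul_cancel₀ (by positivity), one_smul,
    smul_comm _ ((K * (K - 1) / 2 : ℝ) * η ^ 4)]
  rfl

end Expansion

open Matrix in
theorem le_smul_one_of_norm_le {ι : Type*} [Fintype ι] [DecidableEq ι] {A : Matrix ι ι ℝ}
    (hA : IsSelfAdjoint A) {c : ℝ} (h : ‖A‖ ≤ c) : A ≤ c • 1 := by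
  rw [Matrix.le_iff, Matrix.posSemidef_iff_dotProduct_mulVec]
  refine ⟨((IsSelfAdjoint.all c).smul (IsSelfAdjoint.one _)).sub hA, fun x => ?_⟩
  set y : EuclideanSpace ℝ ι := WithLp.toLp 2 x
  have hAy : inner ℝ y (toEuclideanCLM (𝕜 := ℝ) A y) ≤ c * ‖y‖ ^ 2 :=
    calc inner ℝ y (toEuclideanCLM (𝕜 := ℝ) A y) ≤ ‖y‖ * ‖toEuclideanCLM (𝕜 := ℝ) A y‖ :=
          real_inner_le_norm _ _
      _ ≤ ‖y‖ * (‖A‖ * ‖y‖) := by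
          gcongr
          exact cstar_norm_def A ▸ (toEuclideanCLM (𝕜 := ℝ) A).le_opNorm y
      _ = ‖A‖ * ‖y‖ ^ 2 := by ring
      _ ≤ c * ‖y‖ ^ 2 := by gcongr
  have hy := real_inner_self_eq_norm_sq y
  rw [EuclideanSpace.inner_eq_star_dotProduct] at hy
  rw [inner_toEuclideanCLM] at hAy
  simp only [y, star_trivial] at hy hAy
  simp only [star_trivial, sub_mulVec, smul_mulVec, one_mulVec, dotProduct_sub, dotProduct_smul,
    smul_eq_mul, hy]
  linarith

theorem exists_WSS_sub_WRS_sub_le {n d : ℕ} {M : Fin n → Matrix (Fin d) (Fin d) ℝ}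
    (hM : ∀ i, IsSelfAdjoint (M i)) (K : ℕ) :
    ∃ C > 0, ∃ η₀ > 0, ∀ η ∈ Set.Icc (0 : ℝ) η₀,
      WSS n K (fun i => 1 - η • M i) - WRS n K (fun i => 1 - η • M i) -
        ((K * (K - 1) / 2 : ℝ) * η ^ 4) • permMean (fun σ => fluct M σ ^ 2) ≤ (C * η ^ 5) • 1 := by
  obtain ⟨C, hC, hbound⟩ := (WSS_sub_WRS_sub_isBigO M K).exists_pos
  obtain ⟨η₀, hη₀, hIcc⟩ :=
    mem_nhdsGE_iff_exists_Icc_subset.1 (nhdsWithin_le_nhds hbound.bound)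
  refine ⟨C, hC, η₀, hη₀, fun η hη => le_smul_one_of_norm_le ?_ ?_⟩
  · have hA (i : Fin n) : IsSelfAdjoint (1 - η • M i) :=
      (IsSelfAdjoint.one _).sub ((IsSelfAdjoint.all η).smul (hM i))
    exact ((isSelfAdjoint_WSS K hA).sub (isSelfAdjoint_WRS K hA)).sub
      ((IsSelfAdjoint.all _).smul (isSelfAdjoint_permMean_fluct_sq hM))
  · exact (hIcc hη).trans_eq (by rw [Real.norm_of_nonneg (pow_nonneg hη.1 5)])

theorem statement4_general (n K d : ℕ) (hn : 2 ≤ n)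
    (M : Fin n → Matrix (Fin d) (Fin d) ℝ) (hsymm : ∀ i, (M i).IsSymm) :
    ∃ C : ℝ, 0 ≤ C ∧ ∃ η₀ : ℝ, 0 < η₀ ∧ ∀ η ∈ Set.Icc (0 : ℝ) η₀,
      (WRS n K (fun i => 1 - η • M i) - WSS n K (fun i => 1 - η • M i)
        + (η ^ 4 * (K : ℝ) * ((K : ℝ) - 1) / (4 * (n : ℝ) * (n.factorial : ℝ))) •
            (∑ i : Fin n, ∑ j : Fin n, if i ≠ j then (M i * M j - M j * M i) ^ 2 else 0)
        + (C * η ^ 5) • (1 : Matrix (Fin d) (Fin d) ℝ)).PosSemidef := by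
  have hM (i : Fin n) : IsSelfAdjoint (M i) := Matrix.isHermitian_iff_isSymm.2 (hsymm i)
  obtain ⟨C, hC, η₀, hη₀, hremainder⟩ := exists_WSS_sub_WRS_sub_le hM K
  refine ⟨C, hC.le, η₀, hη₀, fun η hη => ?_⟩
  have hpairs : 0 ≤ (K * (K - 1) / 2 : ℝ) :=
    sum_range_natCast K ▸ sum_nonneg fun j _ => j.cast_nonneg
  have hcomm := smul_le_smul_of_nonneg_left (permMean_fluct_sq_le hM hn)
    (mul_nonneg hpairs (pow_nonneg hη.1 4))
  rw [smul_smul] at hcomm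
  rw [← Matrix.nonneg_iff_posSemidef]
  convert add_nonneg (sub_nonneg.2 (hremainder η hη)) (sub_nonneg.2 hcomm) using 1
  module

/-- For n ≥ 2, K ≥ 1 and symmetric M_1,…,M_n, there exist C ≥ 0 and η₀ > 0 such
that for every η ∈ [0,η₀], with A_i = I - η M_i,
W_RS - W_SS ⪰ -(η⁴K(K-1)/(4n·n!)) Σ_{i≠j} (M_iM_j - M_jM_i)² - Cη⁵ I. -/
theorem statement4 (n K d : ℕ) (hn : 2 ≤ n) (hK : 1 ≤ K)
    (M : Fin n → Matrix (Fin d) (Fin d) ℝ) (hsymm : ∀ i, (M i).IsSymm) :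
    ∃ C : ℝ, 0 ≤ C ∧ ∃ η₀ : ℝ, 0 < η₀ ∧ ∀ η ∈ Set.Icc (0 : ℝ) η₀,
      (WRS n K (fun i => 1 - η • M i) - WSS n K (fun i => 1 - η • M i)
        + (η ^ 4 * (K : ℝ) * ((K : ℝ) - 1) / (4 * (n : ℝ) * (n.factorial : ℝ))) •
            (∑ i : Fin n, ∑ j : Fin n, if i ≠ j then (M i * M j - M j * M i) ^ 2 else 0)
        + (C * η ^ 5) • (1 : Matrix (Fin d) (Fin d) ℝ)).PosSemidef :=
  statement4_general n K d hn M hsymm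
end

section
/- For any invertible real 2×2 matrix Q and any diagonal real 2×2 matrix Λ with nonnegative diagonal entries, the numerical radius of Q Λ Q^{−1} equals (1/2) ‖Q Λ Q^{−1} + Q^{−T} Λ Q^T‖, where Q^{−T} denotes the transpose of the inverse of Q. -/
open Matrix

/-- The numerical radius of a complex square matrix:
`w(M) = sup { |vᴴ M v| : ‖v‖ ≤ 1 }` (Euclidean norm). -/
noncomputable def numRadius {d : ℕ} (M : Matrix (Fin d) (Fin d) ℂ) : ℝ :=
  sSup {r : ℝ | ∃ v : EuclideanSpace ℂ (Fin d), ‖v‖ ≤ 1 ∧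
    r = ‖(star ((WithLp.equiv 2 (Fin d → ℂ)) v) ⬝ᵥ
          M.mulVec ((WithLp.equiv 2 (Fin d → ℂ)) v))‖}

/-!
Write `A = QΛQ⁻¹ = !![a, b; c, d]`. As `Λ` is symmetric, `Q⁻ᵀΛQᵀ = Aᵀ`; as `A` is similar to `Λ`,
its trace `a + d` is nonnegative and its spectrum is real: `(a - d)² + 4bc = (λ₁ - λ₂)² ≥ 0`.
Put `t = √((a - d)² + (b + c)²)`. The symmetric matrix `A + Aᵀ` has eigenvalues `a + d ± t`, so its
norm is `a + d + t`. For `‖v‖ ≤ 1` one has `2 vᴴAv = (a + d)‖v‖² + w`, and Cauchy–Schwarz together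
with `(b - c)² ≤ t²` (which is the reality of the spectrum) gives `|w| ≤ t‖v‖²`. Hence
`w(A) ≤ (a + d + t)/2`, with equality at a unit eigenvector of `A + Aᵀ` for `a + d + t`.
-/

-- Applied with `P = |u₀|²`, `Q = |u₁|²` and `R + I i = conj u₀ * u₁`, so that `R² + I² = P Q`.
theorem sq_add_sq_le_of_discrim_nonneg (a b c d P Q R I : ℝ)
    (hdisc : 0 ≤ (a - d) ^ 2 + 4 * b * c) (hRI : R ^ 2 + I ^ 2 = P * Q) :
    ((a - d) * (P - Q) + 2 * (b + c) * R) ^ 2 + (2 * (b - c) * I) ^ 2 ≤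
      ((a - d) ^ 2 + (b + c) ^ 2) * (P + Q) ^ 2 := by
  have cauchySchwarz : ((a - d) * (P - Q) + (b + c) * (2 * R)) ^ 2 ≤
      ((a - d) ^ 2 + (b + c) ^ 2) * ((P - Q) ^ 2 + (2 * R) ^ 2) := by
    nlinarith [sq_nonneg ((a - d) * (2 * R) - (b + c) * (P - Q))]
  have hPQ : (P + Q) ^ 2 = (P - Q) ^ 2 + (2 * R) ^ 2 + (2 * I) ^ 2 := by
    linear_combination (-4) * hRI
  rw [hPQ]
  nlinarith [mul_nonneg hdisc (sq_nonneg I)]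

theorem exists_unit_eigenvector_fin_two (a d e : ℝ) :
    ∃ x y : ℝ, x ^ 2 + y ^ 2 = 1 ∧
      2 * a * x + e * y = (a + d + √((a - d) ^ 2 + e ^ 2)) * x ∧
      e * x + 2 * d * y = (a + d + √((a - d) ^ 2 + e ^ 2)) * y := by
  set t := √((a - d) ^ 2 + e ^ 2)
  have ht2 : t ^ 2 = (a - d) ^ 2 + e ^ 2 := Real.sq_sqrt (by positivity)
  by_cases h : t + a - d = 0
  · have he : e = 0 := by
      rw [show t = d - a by linarith] at ht2
      exact pow_eq_zero_iff two_ne_zero |>.mp (by linarith)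
    exact ⟨0, 1, by norm_num, by simp [he], by rw [he]; linarith⟩
  · set n := √((t + a - d) ^ 2 + e ^ 2)
    have hn2 : n ^ 2 = (t + a - d) ^ 2 + e ^ 2 := Real.sq_sqrt (by positivity)
    have hn : n ≠ 0 := (Real.sqrt_pos.mpr (by positivity)).ne'
    refine ⟨(t + a - d) / n, e / n, ?_, ?_, ?_⟩
    · field_simp
      linarith
    · field_simp
      linarith
    · field_simp
      ring

theorem sq_add_sq_le_of_trace_nonneg (a d e x y : ℝ) (htr : 0 ≤ a + d) :
    (2 * a * x + e * y) ^ 2 + (e * x + 2 * d * y) ^ 2 ≤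
      (a + d + √((a - d) ^ 2 + e ^ 2)) ^ 2 * (x ^ 2 + y ^ 2) := by
  set t := √((a - d) ^ 2 + e ^ 2)
  have ht2 : t ^ 2 = (a - d) ^ 2 + e ^ 2 := Real.sq_sqrt (by positivity)
  set μ := a + d + t
  have charpoly : μ ^ 2 - 2 * (a + d) * μ + (4 * a * d - e ^ 2) = 0 := by
    linear_combination ht2
  have cauchySchwarz :
      ((a - d) * (x ^ 2 - y ^ 2) + e * (2 * x * y)) ^ 2 ≤ (t * (x ^ 2 + y ^ 2)) ^ 2 := by
    rw [mul_pow, ht2]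
    nlinarith [sq_nonneg ((a - d) * (2 * x * y) - e * (x ^ 2 - y ^ 2))]
  have rayleigh : 2 * a * x ^ 2 + 2 * e * x * y + 2 * d * y ^ 2 ≤ μ * (x ^ 2 + y ^ 2) := by
    nlinarith [abs_le_of_sq_le_sq' cauchySchwarz (by positivity)]
  have cayleyHamilton : (2 * a * x + e * y) ^ 2 + (e * x + 2 * d * y) ^ 2 =
      μ ^ 2 * (x ^ 2 + y ^ 2) -
        2 * (a + d) * (μ * (x ^ 2 + y ^ 2) - (2 * a * x ^ 2 + 2 * e * x * y + 2 * d * y ^ 2)) := by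
    linear_combination (-(x ^ 2 + y ^ 2)) * charpoly
  rw [cayleyHamilton]
  linarith [mul_nonneg htr (sub_nonneg.mpr rayleigh)]

theorem specNorm_add_transpose_fin_two (a b c d : ℝ) (htr : 0 ≤ a + d) :
    specNorm (!![a, b; c, d] + !![a, b; c, d]ᵀ) = a + d + √((a - d) ^ 2 + (b + c) ^ 2) := by
  set μ := a + d + √((a - d) ^ 2 + (b + c) ^ 2)
  have hμ : 0 ≤ μ := add_nonneg htr (Real.sqrt_nonneg _)
  have hsum : !![a, b; c, d] + !![a, b; c, d]ᵀ = !![2 * a, b + c; b + c, 2 * d] := by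
    ext i j
    fin_cases i <;> fin_cases j <;> simp <;> ring
  rw [hsum, specNorm]
  set S := toEuclideanCLM (𝕜 := ℝ) !![2 * a, b + c; b + c, 2 * d]
  have hS : ∀ v : EuclideanSpace ℝ (Fin 2),
      S v = WithLp.toLp 2 ![2 * a * v 0 + (b + c) * v 1, (b + c) * v 0 + 2 * d * v 1] := by
    intro v
    ext i
    fin_cases i <;> simp [S, mulVec, dotProduct, Fin.sum_univ_two]
  apply le_antisymm
  · refine S.opNorm_le_bound hμ fun v => ?_
    rw [← sq_le_sq₀ (norm_nonneg _) (by positivity), mul_pow, EuclideanSpace.real_norm_sq_eq,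
      EuclideanSpace.real_norm_sq_eq, Fin.sum_univ_two, Fin.sum_univ_two, hS]
    exact sq_add_sq_le_of_trace_nonneg a d (b + c) (v 0) (v 1) htr
  · obtain ⟨x, y, hxy, hx, hy⟩ := exists_unit_eigenvector_fin_two a d (b + c)
    set v : EuclideanSpace ℝ (Fin 2) := WithLp.toLp 2 ![x, y]
    have hv : ‖v‖ = 1 := by
      rw [← pow_eq_one_iff_of_nonneg (norm_nonneg _) two_ne_zero, EuclideanSpace.real_norm_sq_eq]
      simpa [v, Fin.sum_univ_two] using hxy
    have hSv : S v = μ • v := by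
      rw [hS]
      ext i
      fin_cases i <;> simp [v, μ, hx, hy]
    calc μ = ‖S v‖ := by rw [hSv, norm_smul, hv, mul_one, Real.norm_of_nonneg hμ]
      _ ≤ ‖S‖ := S.unit_le_opNorm v hv.le

open ComplexConjugate in
theorem star_dotProduct_mulVec_fin_two (a b c d : ℝ) (u : Fin 2 → ℂ) :
    star u ⬝ᵥ (!![a, b; c, d].map Complex.ofReal) *ᵥ u =
      a * Complex.normSq (u 0) + d * Complex.normSq (u 1) + b * (conj (u 0) * u 1) +
        c * conj (conj (u 0) * u 1) := by
  simp only [dotProduct, mulVec, Fin.sum_univ_two, Complex.normSq_eq_conj_mul_self]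
  simp
  ring

open ComplexConjugate in
theorem norm_star_dotProduct_mulVec_fin_two_le (a b c d : ℝ) (htr : 0 ≤ a + d)
    (hdisc : 0 ≤ (a - d) ^ 2 + 4 * b * c) (u : Fin 2 → ℂ) :
    ‖star u ⬝ᵥ (!![a, b; c, d].map Complex.ofReal) *ᵥ u‖ ≤
      (a + d + √((a - d) ^ 2 + (b + c) ^ 2)) / 2 *
        (Complex.normSq (u 0) + Complex.normSq (u 1)) := by
  set t := √((a - d) ^ 2 + (b + c) ^ 2)
  set P := Complex.normSq (u 0)
  set Q := Complex.normSq (u 1)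
  set ζ := conj (u 0) * u 1
  have hPQ : 0 ≤ P + Q := add_nonneg (Complex.normSq_nonneg _) (Complex.normSq_nonneg _)
  set w : ℂ := ⟨(a - d) * (P - Q) + 2 * (b + c) * ζ.re, 2 * (b - c) * ζ.im⟩
  have hsplit : 2 * (star u ⬝ᵥ (!![a, b; c, d].map Complex.ofReal) *ᵥ u) =
      ((a + d) * (P + Q) : ℝ) + w := by
    rw [star_dotProduct_mulVec_fin_two]
    apply Complex.ext <;> simp [w, ζ, P, Q] <;> ring
  have hw : ‖w‖ ≤ t * (P + Q) := by
    have hζ : ζ.re ^ 2 + ζ.im ^ 2 = P * Q := by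
      rw [sq, sq, ← Complex.normSq_apply]
      simp [ζ, P, Q]
    rw [← sq_le_sq₀ (norm_nonneg _) (by positivity), Complex.sq_norm, Complex.normSq_mk, mul_pow,
      Real.sq_sqrt (by positivity)]
    nlinarith [sq_add_sq_le_of_discrim_nonneg a b c d P Q ζ.re ζ.im hdisc hζ]
  calc ‖star u ⬝ᵥ (!![a, b; c, d].map Complex.ofReal) *ᵥ u‖
      = ‖((a + d) * (P + Q) : ℝ) + w‖ / 2 := by rw [← hsplit, norm_mul]; norm_num
    _ ≤ ((a + d) * (P + Q) + t * (P + Q)) / 2 := by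
      grw [norm_add_le, Complex.norm_real, Real.norm_of_nonneg (by positivity), hw]
    _ = (a + d + t) / 2 * (P + Q) := by ring

theorem numRadius_fin_two (a b c d : ℝ) (htr : 0 ≤ a + d) (hdisc : 0 ≤ (a - d) ^ 2 + 4 * b * c) :
    numRadius (!![a, b; c, d].map Complex.ofReal) = (a + d + √((a - d) ^ 2 + (b + c) ^ 2)) / 2 := by
  obtain ⟨x, y, hxy, hx, hy⟩ := exists_unit_eigenvector_fin_two a d (b + c)
  set μ := a + d + √((a - d) ^ 2 + (b + c) ^ 2)
  have normSq_add_normSq (v : EuclideanSpace ℂ (Fin 2)) :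
      Complex.normSq (v 0) + Complex.normSq (v 1) = ‖v‖ ^ 2 := by
    simp [EuclideanSpace.norm_sq_eq, Fin.sum_univ_two, Complex.normSq_eq_norm_sq]
  refine IsGreatest.csSup_eq ⟨?_, ?_⟩
  · set v : EuclideanSpace ℂ (Fin 2) := WithLp.toLp 2 ![(x : ℂ), y]
    have hv : ‖v‖ = 1 := by
      rw [← pow_eq_one_iff_of_nonneg (norm_nonneg _) two_ne_zero, ← normSq_add_normSq]
      simpa [v, Complex.normSq_ofReal, ← sq] using hxy
    have hval : a * x ^ 2 + d * y ^ 2 + (b + c) * (x * y) = μ / 2 := by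
      linear_combination (x * hx + y * hy + μ * hxy) / 2
    refine ⟨v, hv.le, ?_⟩
    rw [WithLp.equiv_apply, star_dotProduct_mulVec_fin_two]
    have hμ : 0 ≤ μ / 2 := by positivity
    simp only [v, cons_val_zero, cons_val_one, Complex.normSq_ofReal, ← Complex.ofReal_mul,
      Complex.conj_ofReal]
    rw [← Complex.norm_of_nonneg hμ, ← hval]
    push_cast
    ring_nf
  · rintro r ⟨v, hv, rfl⟩
    calc _ ≤ μ / 2 * (Complex.normSq (v 0) + Complex.normSq (v 1)) :=
          norm_star_dotProduct_mulVec_fin_two_le a b c d htr hdisc _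
      _ ≤ μ / 2 * 1 := by
        gcongr
        rw [normSq_add_normSq]
        nlinarith [norm_nonneg v]
      _ = μ / 2 := mul_one _

/-- For any invertible real 2×2 matrix Q and diagonal Λ with nonnegative entries,
the numerical radius of QΛQ⁻¹ equals (1/2)‖QΛQ⁻¹ + Q⁻ᵀΛQᵀ‖. -/
theorem statement6 (Q Λ : Matrix (Fin 2) (Fin 2) ℝ) (hQ : IsUnit Q)
    (hΛdiag : Λ.IsDiag) (hΛnonneg : ∀ i, 0 ≤ Λ i i) :
    numRadius ((Q * Λ * Q⁻¹).map (Complex.ofReal)) =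
      (1 / 2 : ℝ) * specNorm (Q * Λ * Q⁻¹ + (Q⁻¹)ᵀ * Λ * Qᵀ) := by
  set A := Q * Λ * Q⁻¹
  have htranspose : (Q⁻¹)ᵀ * Λ * Qᵀ = Aᵀ := by
    simp only [A, transpose_mul, hΛdiag.isSymm.eq, Matrix.mul_assoc]
  have htr : A 0 0 + A 1 1 = Λ 0 0 + Λ 1 1 := by
    rw [← trace_fin_two, trace_conj hQ, trace_fin_two]
  have hdet : A 0 0 * A 1 1 - A 0 1 * A 1 0 = Λ 0 0 * Λ 1 1 := by
    rw [← det_fin_two, det_conj hQ, det_fin_two, hΛdiag (by decide : (0 : Fin 2) ≠ 1), zero_mul,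
      sub_zero]
  have htr_nonneg : 0 ≤ A 0 0 + A 1 1 := htr ▸ add_nonneg (hΛnonneg 0) (hΛnonneg 1)
  have hdisc : 0 ≤ (A 0 0 - A 1 1) ^ 2 + 4 * A 0 1 * A 1 0 := by
    have hdisc_eq : (A 0 0 - A 1 1) ^ 2 + 4 * A 0 1 * A 1 0 = (Λ 0 0 - Λ 1 1) ^ 2 := by
      linear_combination htr * (A 0 0 + A 1 1 + Λ 0 0 + Λ 1 1) - 4 * hdet
    exact hdisc_eq ▸ sq_nonneg _
  rw [htranspose, eta_fin_two A, numRadius_fin_two _ _ _ _ htr_nonneg hdisc,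
    specNorm_add_transpose_fin_two _ _ _ _ htr_nonneg]
  ring
end

section
/- Let x_1, …, x_n ∈ ℝ^d (d ≤ n) be unit vectors with |x_i^T x_j| ≤ δ for all i ≠ j, and let s_max be the maximum eigenvalue of Σ_{i=1}^n x_i x_i^T. Set A_i := I − η x_i x_i^T for η ≥ 0. Then the minimum eigenvalue of W_RS(n,1,A_1,…,A_n) is at least 1 − s_max Σ_{m=1}^{n} η^m n^{m−1} δ^{m−1}. -/
open Matrix

open scoped ComplexOrder in
theorem Matrix.IsHermitian.posSemidef_smul_one_sub {n 𝕜 : Type*} [RCLike 𝕜] [Fintype n]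
    [DecidableEq n] {A : Matrix n n 𝕜} (hA : A.IsHermitian) {c : ℝ}
    (hc : ∀ i, hA.eigenvalues i ≤ c) : (c • 1 - A).PosSemidef := by
  have hdiag : (diagonal fun i => ((c - hA.eigenvalues i : ℝ) : 𝕜)).PosSemidef :=
    posSemidef_diagonal_iff.2 fun i => RCLike.ofReal_nonneg.2 (sub_nonneg.2 (hc i))
  convert hdiag.mul_mul_conjTranspose_same (hA.eigenvectorUnitary : Matrix n n 𝕜) using 1
  conv_lhs => rw [hA.spectral_theorem]
  have hdiff : (diagonal fun i => ((c - hA.eigenvalues i : ℝ) : 𝕜))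
      = c • 1 - diagonal (RCLike.ofReal ∘ hA.eigenvalues) := by
    ext i j
    by_cases h : i = j <;> simp [h, RCLike.real_smul_eq_coe_mul]
  rw [hdiff, Unitary.conjStarAlgAut_apply, mul_sub, sub_mul, mul_smul_comm, smul_mul_assoc,
    mul_one, ← star_eq_conjTranspose, Unitary.mul_star_self_of_mem hA.eigenvectorUnitary.2]

theorem Matrix.IsHermitian.dotProduct_mulVec_le {n : Type*} [Fintype n] [DecidableEq n]
    {A : Matrix n n ℝ} (hA : A.IsHermitian) (v : n → ℝ) :
    v ⬝ᵥ A *ᵥ v ≤ (⨆ i, hA.eigenvalues i) * (v ⬝ᵥ v) := by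
  have := (hA.posSemidef_smul_one_sub fun i =>
    le_ciSup (Set.finite_range hA.eigenvalues).bddAbove i).dotProduct_mulVec_nonneg v
  simpa [sub_mulVec, smul_mulVec, dotProduct_sub] using this

theorem dotProduct_sum_vecMulVec_self_mulVec {ι m : Type*} [Fintype ι] [Fintype m]
    (x : ι → m → ℝ) (v : m → ℝ) :
    v ⬝ᵥ (∑ i, vecMulVec (x i) (x i)) *ᵥ v = ∑ i, (x i ⬝ᵥ v) ^ 2 := by
  rw [sum_mulVec, dotProduct_sum]
  refine Finset.sum_congr rfl fun i _ => ?_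
  rw [vecMulVec_mulVec, op_smul_eq_smul, dotProduct_smul, smul_eq_mul, dotProduct_comm v, sq]

section RankOneProduct

variable {m : Type*} [Fintype m] {η δ : ℝ}

theorem abs_dotProduct_sum_smul_le {ι : Type*} [Fintype ι] (u : m → ℝ) (z : ι → m → ℝ)
    (c : ι → ℝ) (hz : ∀ i, |u ⬝ᵥ z i| ≤ δ) : |u ⬝ᵥ ∑ i, c i • z i| ≤ δ * ∑ i, |c i| := by
  rw [dotProduct_sum, Finset.mul_sum]
  refine (Finset.abs_sum_le_sum_abs _ _).trans (Finset.sum_le_sum fun i _ => ?_)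
  rw [dotProduct_smul, smul_eq_mul, abs_mul, mul_comm]
  exact mul_le_mul_of_nonneg_right (hz i) (abs_nonneg _)

variable [DecidableEq m]

theorem one_sub_smul_vecMulVec_mulVec (y w : m → ℝ) :
    (1 - η • vecMulVec y y) *ᵥ w = w - (η * (y ⬝ᵥ w)) • y := by
  rw [sub_mulVec, one_mulVec, smul_mulVec, vecMulVec_mulVec, op_smul_eq_smul, smul_smul]

variable (η) in
noncomputable def rankOneProd {k : ℕ} (y : Fin k → m → ℝ) : Matrix m m ℝ :=
  (List.ofFn fun i => 1 - η • vecMulVec (y i) (y i)).prod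

theorem rankOneProd_succ {k : ℕ} (y : Fin (k + 1) → m → ℝ) :
    rankOneProd η y = (1 - η • vecMulVec (y 0) (y 0)) * rankOneProd η (fun i => y i.succ) := by
  rw [rankOneProd, List.ofFn_succ, List.prod_cons, rankOneProd]

variable (η) in
noncomputable def rankOneCoeff : ∀ {k : ℕ}, (Fin k → m → ℝ) → (m → ℝ) → Fin k → ℝ
  | 0, _, _ => Fin.elim0
  | _ + 1, y, v => Fin.cons (-(η * (y 0 ⬝ᵥ rankOneProd η (fun i => y i.succ) *ᵥ v)))
      (rankOneCoeff (fun i => y i.succ) v)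

theorem rankOneProd_mulVec {k : ℕ} (y : Fin k → m → ℝ) (v : m → ℝ) :
    rankOneProd η y *ᵥ v = v + ∑ i, rankOneCoeff η y v i • y i := by
  induction k with
  | zero => simp [rankOneProd]
  | succ k ih =>
    rw [rankOneProd_succ, ← mulVec_mulVec, one_sub_smul_vecMulVec_mulVec, Fin.sum_univ_succ,
      rankOneCoeff]
    simp only [Fin.cons_zero, Fin.cons_succ]
    rw [← add_assoc, add_right_comm, ← ih, neg_smul, ← sub_eq_add_neg]

theorem abs_dotProduct_rankOneProd_mulVec_sub_le {k : ℕ} (y : Fin k → m → ℝ) (u v : m → ℝ)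
    (hu : ∀ i, |u ⬝ᵥ y i| ≤ δ) :
    |u ⬝ᵥ rankOneProd η y *ᵥ v - u ⬝ᵥ v| ≤ δ * ∑ i, |rankOneCoeff η y v i| := by
  rw [rankOneProd_mulVec, dotProduct_add, add_sub_cancel_left]
  exact abs_dotProduct_sum_smul_le _ _ _ hu

theorem sum_abs_rankOneCoeff_le (hη : 0 ≤ η) (hδ : 0 ≤ δ) {k : ℕ} (y : Fin k → m → ℝ)
    (hy : ∀ i j, i ≠ j → |y i ⬝ᵥ y j| ≤ δ) (v : m → ℝ) :
    ∑ i, |rankOneCoeff η y v i| ≤ η * (1 + η * δ) ^ (k - 1) * ∑ i, |y i ⬝ᵥ v| := by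
  induction k with
  | zero => simp
  | succ k ih =>
    have hy' : ∀ i j : Fin k, i ≠ j → |y i.succ ⬝ᵥ y j.succ| ≤ δ :=
      fun i j hij => hy _ _ ((Fin.succ_injective _).ne hij)
    set S := ∑ i, |rankOneCoeff η (fun i => y i.succ) v i|
    set Bt := ∑ i : Fin k, |y i.succ ⬝ᵥ v|
    have hdev := abs_dotProduct_rankOneProd_mulVec_sub_le (η := η) (fun i => y i.succ) (y 0) v
      fun i => hy _ _ (Fin.succ_ne_zero i).symm
    have hS : (1 + η * δ) * S ≤ η * (1 + η * δ) ^ k * Bt := by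
      cases k with
      | zero => simp [S, Bt]
      | succ k =>
        calc (1 + η * δ) * S ≤ (1 + η * δ) * (η * (1 + η * δ) ^ k * Bt) := by gcongr; exact ih _ hy'
          _ = _ := by ring
    have hB0 : |y 0 ⬝ᵥ v| ≤ (1 + η * δ) ^ k * |y 0 ⬝ᵥ v| :=
      le_mul_of_one_le_left (abs_nonneg _) (one_le_pow₀ (by nlinarith))
    have ht := mul_le_mul_of_nonneg_left ((abs_sub_abs_le_abs_sub _ _).trans hdev) hη
    rw [Fin.sum_univ_succ, Fin.sum_univ_succ, rankOneCoeff]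
    simp only [Fin.cons_zero, Fin.cons_succ, abs_neg, abs_mul, abs_of_nonneg hη,
      Nat.add_sub_cancel]
    linarith [mul_le_mul_of_nonneg_left hB0 hη]

theorem abs_rankOneCoeff_add_le (hη : 0 ≤ η) (hδ : 0 ≤ δ) {k : ℕ} (y : Fin k → m → ℝ)
    (hy : ∀ i j, i ≠ j → |y i ⬝ᵥ y j| ≤ δ) (v : m → ℝ) (i : Fin k) :
    |rankOneCoeff η y v i + η * (y i ⬝ᵥ v)| ≤
      η ^ 2 * δ * (1 + η * δ) ^ (k - 2) * (∑ j, |y j ⬝ᵥ v| - |y i ⬝ᵥ v|) := by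
  induction k with
  | zero => exact i.elim0
  | succ k ih =>
    have hy' : ∀ i j : Fin k, i ≠ j → |y i.succ ⬝ᵥ y j.succ| ≤ δ :=
      fun i j hij => hy _ _ ((Fin.succ_injective _).ne hij)
    rw [Fin.sum_univ_succ, show k + 1 - 2 = k - 1 by omega]
    refine Fin.cases ?_ (fun j => ?_) i
    · rw [rankOneCoeff, Fin.cons_zero, add_sub_cancel_left, neg_add_eq_sub, ← mul_sub, abs_mul,
        abs_of_nonneg hη, abs_sub_comm]
      calc η * |y 0 ⬝ᵥ rankOneProd η (fun i => y i.succ) *ᵥ v - y 0 ⬝ᵥ v|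
          ≤ η * (δ * (η * (1 + η * δ) ^ (k - 1) * ∑ i : Fin k, |y i.succ ⬝ᵥ v|)) := by
            gcongr
            exact (abs_dotProduct_rankOneProd_mulVec_sub_le _ _ _
              fun i => hy _ _ (Fin.succ_ne_zero i).symm).trans
              (by gcongr; exact sum_abs_rankOneCoeff_le hη hδ _ hy' v)
        _ = _ := by ring
    · have hBt : |y j.succ ⬝ᵥ v| ≤ ∑ i : Fin k, |y i.succ ⬝ᵥ v| :=
        Finset.single_le_sum (f := fun i : Fin k => |y i.succ ⬝ᵥ v|) (fun i _ => abs_nonneg _)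
          (Finset.mem_univ j)
      rw [rankOneCoeff, Fin.cons_succ]
      refine (ih _ hy' j).trans ?_
      gcongr _ * ?_ * ?_
      · exact pow_le_pow_right₀ (by nlinarith) (by omega)
      · linarith [abs_nonneg (y 0 ⬝ᵥ v)]

theorem le_dotProduct_rankOneProd_mulVec (hη : 0 ≤ η) (hδ : 0 ≤ δ) {k : ℕ} (y : Fin k → m → ℝ)
    (hy : ∀ i j, i ≠ j → |y i ⬝ᵥ y j| ≤ δ) (v : m → ℝ) :
    v ⬝ᵥ v - (η + η ^ 2 * δ * (1 + η * δ) ^ (k - 2) * (k - 1)) * ∑ i, (y i ⬝ᵥ v) ^ 2 ≤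
      v ⬝ᵥ rankOneProd η y *ᵥ v := by
  set c := rankOneCoeff η y v
  set K := η ^ 2 * δ * (1 + η * δ) ^ (k - 2)
  set B := ∑ i, |y i ⬝ᵥ v|
  set Q := ∑ i, (y i ⬝ᵥ v) ^ 2
  have hK : 0 ≤ K := by positivity
  have hterm (i : Fin k) :
      -(η * (y i ⬝ᵥ v) ^ 2) - K * ((B - |y i ⬝ᵥ v|) * |y i ⬝ᵥ v|) ≤ v ⬝ᵥ (c i • y i) := by
    have h1 := neg_abs_le ((c i + η * (y i ⬝ᵥ v)) * (y i ⬝ᵥ v))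
    have h2 := mul_le_mul_of_nonneg_right (abs_rankOneCoeff_add_le hη hδ y hy v i)
      (abs_nonneg (y i ⬝ᵥ v))
    rw [abs_mul] at h1
    rw [dotProduct_smul, smul_eq_mul, dotProduct_comm v]
    linarith
  have hcross : ∑ i, (B - |y i ⬝ᵥ v|) * |y i ⬝ᵥ v| = B ^ 2 - Q := by
    simp only [B, Q, sub_mul, Finset.sum_sub_distrib, ← Finset.mul_sum, abs_mul_abs_self, sq]
  have hCS : B ^ 2 ≤ k * Q := by
    simpa [B, Q] using sq_sum_le_card_mul_sum_sq (s := Finset.univ) (f := fun i => |y i ⬝ᵥ v|)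
  have hsum := Finset.sum_le_sum fun i (_ : i ∈ Finset.univ) => hterm i
  rw [Finset.sum_sub_distrib, Finset.sum_neg_distrib, ← Finset.mul_sum, ← Finset.mul_sum,
    hcross] at hsum
  rw [rankOneProd_mulVec, dotProduct_add, dotProduct_sum]
  linarith [mul_le_mul_of_nonneg_left (show B ^ 2 - Q ≤ (k - 1) * Q by linarith) hK]

end RankOneProduct

theorem Nat.succ_mul_choose_le_pow (j i : ℕ) : (j + 1) * j.choose i ≤ (j + 2) ^ (i + 1) := by
  rw [pow_succ']
  exact Nat.mul_le_mul (by omega) ((Nat.choose_le_pow j i).trans (Nat.pow_le_pow_left (by omega) i))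

theorem add_mul_pow_le_sum_Icc {η δ : ℝ} {n : ℕ} (hn : 1 ≤ n) (hη : 0 ≤ η) (hδ : 0 ≤ δ) :
    η + η ^ 2 * δ * (1 + η * δ) ^ (n - 2) * (n - 1) ≤
      ∑ m ∈ Finset.Icc 1 n, η ^ m * (n : ℝ) ^ (m - 1) * δ ^ (m - 1) := by
  obtain ⟨j, rfl⟩ | ⟨j, rfl⟩ : n = 1 ∨ ∃ j, n = j + 2 := by
    rcases n with _ | _ | j <;> simp_all
  · simp
  rw [← Finset.Ico_add_one_right_eq_Icc, Finset.sum_Ico_eq_sum_range,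
    show j + 2 + 1 - 1 = j + 1 + 1 from rfl, Finset.sum_range_succ', add_comm η,
    show j + 2 - 2 = j from rfl, add_comm (1 : ℝ), add_pow]
  simp only [add_tsub_cancel_left, tsub_self, pow_zero, add_zero, pow_one, mul_one, one_pow,
    Finset.mul_sum, Finset.sum_mul]
  refine add_le_add_left (Finset.sum_le_sum fun i _ => ?_) η
  have hcoef : ((j + 1) * j.choose i : ℝ) ≤ (j + 2) ^ (i + 1) := by
    exact_mod_cast Nat.succ_mul_choose_le_pow j i
  calc η ^ 2 * δ * ((η * δ) ^ i * (j.choose i)) * ((j + 2 : ℕ) - 1 : ℝ)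
      = η ^ (i + 2) * δ ^ (i + 1) * ((j + 1) * j.choose i) := by push_cast; ring
    _ ≤ η ^ (i + 2) * δ ^ (i + 1) * (j + 2) ^ (i + 1) := by gcongr
    _ = _ := by push_cast; ring

section Shuffle

variable {n d : ℕ} {A : Fin n → Matrix (Fin d) (Fin d) ℝ}

theorem conjTranspose_permProd (hA : ∀ i, (A i).IsHermitian) (σ : Equiv.Perm (Fin n)) :
    (permProd A σ)ᴴ = permProd A (σ * Fin.revPerm) := by
  simp only [permProd, conjTranspose_list_prod, List.ofFn_eq_map, ← List.map_reverse,
    List.finRange_reverse, List.map_map]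
  congr 2
  ext1 i
  exact (hA _).eq

theorem isHermitian_sum_permProd (hA : ∀ i, (A i).IsHermitian) :
    (∑ σ, permProd A σ).IsHermitian := by
  rw [IsHermitian, conjTranspose_sum]
  simp_rw [conjTranspose_permProd hA]
  exact Fintype.sum_equiv (Equiv.mulRight Fin.revPerm) _ _ fun σ => rfl

theorem posSemidef_WRS_sub_smul_one (hA : ∀ i, (A i).IsHermitian) {c : ℝ}
    (hc : ∀ σ v, c * (v ⬝ᵥ v) ≤ v ⬝ᵥ permProd A σ *ᵥ v) :
    (WRS n 1 A - c • 1).PosSemidef := by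
  rw [WRS, pow_one]
  refine posSemidef_iff_dotProduct_mulVec.2 ⟨((isHermitian_sum_permProd hA).smul
    (.all _)).sub (isHermitian_one.smul (.all c)), fun v => ?_⟩
  have hsum : (n.factorial : ℝ) * (c * (v ⬝ᵥ v)) ≤ ∑ σ, v ⬝ᵥ permProd A σ *ᵥ v := by
    simpa [Fintype.card_perm] using Finset.card_nsmul_le_sum Finset.univ _ _ fun σ _ => hc σ v
  have hfac : (0 : ℝ) < n.factorial := by positivity
  simp only [star_trivial, sub_mulVec, smul_mulVec, one_mulVec, sum_mulVec, dotProduct_sub,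
    dotProduct_smul, dotProduct_sum, smul_eq_mul, sub_nonneg]
  rw [inv_mul_eq_div, le_div_iff₀ hfac]
  linarith

end Shuffle

theorem le_dotProduct_permProd_one_sub_smul_vecMulVec_mulVec {n d : ℕ} {η δ s : ℝ}
    (hη : 0 ≤ η) (hδ : 0 ≤ δ) (x : Fin n → Fin d → ℝ)
    (hx : ∀ i j, i ≠ j → |x i ⬝ᵥ x j| ≤ δ) (hs : ∀ v, ∑ i, (x i ⬝ᵥ v) ^ 2 ≤ s * (v ⬝ᵥ v))
    (σ : Equiv.Perm (Fin n)) (v : Fin d → ℝ) :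
    (1 - s * ∑ m ∈ Finset.Icc 1 n, η ^ m * (n : ℝ) ^ (m - 1) * δ ^ (m - 1)) * (v ⬝ᵥ v) ≤
      v ⬝ᵥ permProd (fun i => 1 - η • vecMulVec (x i) (x i)) σ *ᵥ v := by
  rcases Nat.eq_zero_or_pos n with rfl | hn
  · simp [permProd]
  set f := ∑ m ∈ Finset.Icc 1 n, η ^ m * (n : ℝ) ^ (m - 1) * δ ^ (m - 1)
  set Q := ∑ i, (x i ⬝ᵥ v) ^ 2
  have hprod := le_dotProduct_rankOneProd_mulVec hη hδ (fun i => x (σ i))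
    (fun i j hij => hx _ _ (σ.injective.ne hij)) v
  rw [Equiv.sum_comp σ fun i => (x i ⬝ᵥ v) ^ 2] at hprod
  have hf : 0 ≤ f := Finset.sum_nonneg fun m _ => by positivity
  have hQ : 0 ≤ Q := Finset.sum_nonneg fun i _ => sq_nonneg _
  calc (1 - s * f) * (v ⬝ᵥ v) = v ⬝ᵥ v - f * (s * (v ⬝ᵥ v)) := by ring
    _ ≤ v ⬝ᵥ v - f * Q := by gcongr; exact hs v
    _ ≤ v ⬝ᵥ v - (η + η ^ 2 * δ * (1 + η * δ) ^ (n - 2) * (n - 1)) * Q := by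
        gcongr; exact add_mul_pow_le_sum_Icc hn hη hδ
    _ ≤ _ := hprod

theorem statement8_general (n d : ℕ) (x : Fin n → Fin d → ℝ) (δ smax η : ℝ)
    (hη : 0 ≤ η)
    (hδ : ∀ i j, i ≠ j → |x i ⬝ᵥ x j| ≤ δ)
    (hH : (∑ i : Fin n, Matrix.vecMulVec (x i) (x i)).IsHermitian)
    (hsmax : smax = ⨆ k, hH.eigenvalues k) :
    (WRS n 1 (fun i => 1 - η • Matrix.vecMulVec (x i) (x i))
      - (1 - smax * ∑ m ∈ Finset.Icc 1 n, η ^ m * (n : ℝ) ^ (m - 1) * δ ^ (m - 1)) •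
          (1 : Matrix (Fin d) (Fin d) ℝ)).PosSemidef := by
  have hframe (v : Fin d → ℝ) : ∑ i, (x i ⬝ᵥ v) ^ 2 ≤ smax * (v ⬝ᵥ v) := by
    simpa only [hsmax, dotProduct_sum_vecMulVec_self_mulVec] using hH.dotProduct_mulVec_le v
  have hA (i : Fin n) : (1 - η • vecMulVec (x i) (x i)).IsHermitian := by
    have := (posSemidef_vecMulVec_self_star (x i)).isHermitian
    rw [star_trivial] at this
    exact isHermitian_one.sub (this.smul (.all η))
  rcases le_or_gt n 1 with hn | hn
  · -- only the `m = 1` term survives, so `δ` may be replaced by `0`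
    have hsum : ∑ m ∈ Finset.Icc 1 n, η ^ m * (n : ℝ) ^ (m - 1) * δ ^ (m - 1)
        = ∑ m ∈ Finset.Icc 1 n, η ^ m * (n : ℝ) ^ (m - 1) * 0 ^ (m - 1) :=
      Finset.sum_congr rfl fun m hm => by
        obtain rfl : m = 1 := by simp only [Finset.mem_Icc] at hm; omega
        simp
    rw [hsum]
    refine posSemidef_WRS_sub_smul_one hA
      (le_dotProduct_permProd_one_sub_smul_vecMulVec_mulVec hη le_rfl x ?_ hframe)
    exact fun i j hij => absurd ((Fin.subsingleton_iff_le_one.2 hn).elim i j) hij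
  · have hδ0 : 0 ≤ δ := (abs_nonneg _).trans (hδ ⟨0, by omega⟩ ⟨1, hn⟩ (by simp [Fin.ext_iff]))
    exact posSemidef_WRS_sub_smul_one hA
      (le_dotProduct_permProd_one_sub_smul_vecMulVec_mulVec hη hδ0 x hδ hframe)

/-- Lower bound on the minimum eigenvalue of W_RS(n,1), expressed as the positive
semidefiniteness of W_RS − (bound)·I.  Here x_1,…,x_n are unit vectors in ℝ^d (d ≤ n) with
|xᵢᵀxⱼ| ≤ δ for i ≠ j, and s_max is the maximum eigenvalue of Σᵢ xᵢxᵢᵀ. -/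
theorem statement8 (n d : ℕ) (hd : d ≤ n) (x : Fin n → Fin d → ℝ) (δ smax η : ℝ)
    (hη : 0 ≤ η)
    (hunit : ∀ i, x i ⬝ᵥ x i = 1)
    (hδ : ∀ i j, i ≠ j → |x i ⬝ᵥ x j| ≤ δ)
    (hH : (∑ i : Fin n, Matrix.vecMulVec (x i) (x i)).IsHermitian)
    (hsmax : smax = ⨆ k, hH.eigenvalues k) :
    (WRS n 1 (fun i => 1 - η • Matrix.vecMulVec (x i) (x i))
      - (1 - smax * ∑ m ∈ Finset.Icc 1 n, η ^ m * (n : ℝ) ^ (m - 1) * δ ^ (m - 1)) •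
          (1 : Matrix (Fin d) (Fin d) ℝ)).PosSemidef :=
  statement8_general n d x δ smax η hη hδ hH hsmax
end

section
/- For every integer n ≥ 4, setting δ = n^{−1/2}, s_min = n^{−1/4}, s_max = n^{1/4}, and for every η ∈ [0, 1/(6n)], the following two real quantities are nonnegative: (i) η^2 (n−1)(1−δ) s_min/(2n) − Σ_{m=4}^{n} η^m (s_max^m + s_max n^{m−1} δ^{m−1}) − (η^3/6)(3 s_max^3/n + s_max n^{1/2}(n^2 δ^4 + 6 n δ^2 + 1)^{1/2}); and (ii) 1 − s_max Σ_{m=1}^{n} η^m n^{m−1} δ^{m−1}. -/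
/-!
Write `t = n^{1/4}`, so that `n = t⁴`, `δ = t⁻²`, `s_min = t⁻¹`, `s_max = t` and `nδ = t²`.
The constraint `η ≤ 1/(6n)` gives `ηt, ηt² ≤ 1/12`, so every sum is a geometric series in
`ηt` or `ηt²` and is at most `12/11` times its first term, while the square root collapses to
`t³√8`. Part (ii) is then bounded by `(12/11) ηt ≤ 1`; part (i), multiplied by `2t⁷/η²`,
becomes a polynomial inequality in `t` and `ηt⁴ ≤ 1/6` which holds as soon as `t² ≥ 2`.
-/

open Finset

lemma sum_Icc_pow_mul_pow_pred_le {η x y : ℝ} (hη : 0 ≤ η) (hxy : 0 < x * y)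
    (hηxy : η * (x * y) < 1) {a : ℕ} (ha : 1 ≤ a) (b : ℕ) :
    ∑ m ∈ Icc a b, η ^ m * x ^ (m - 1) * y ^ (m - 1)
      ≤ (η * (x * y)) ^ a / (x * y * (1 - η * (x * y))) := by
  have hterm : ∀ m ∈ Icc a b,
      η ^ m * x ^ (m - 1) * y ^ (m - 1) = (η * (x * y)) ^ m / (x * y) := by
    intro m hm
    obtain ⟨k, rfl⟩ : ∃ k, m = k + 1 := ⟨m - 1, by grind⟩
    rw [Nat.add_sub_cancel, eq_div_iff hxy.ne']
    ring
  calc ∑ m ∈ Icc a b, η ^ m * x ^ (m - 1) * y ^ (m - 1)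
      = (∑ m ∈ Ico a (b + 1), (η * (x * y)) ^ m) / (x * y) := by
        rw [sum_congr rfl hterm, ← sum_div, Ico_add_one_right_eq_Icc]
    _ ≤ (η * (x * y)) ^ a / (1 - η * (x * y)) / (x * y) :=
        div_le_div_of_nonneg_right (geom_sum_Ico_le_of_lt_one (by positivity) hηxy) hxy.le
    _ = _ := by rw [div_div, mul_comm (1 - _)]

lemma div_one_sub_le_of_le {x r : ℝ} (hx : 0 ≤ x) (hr : r ≤ 1 / 12) :
    x / (1 - r) ≤ 12 / 11 * x := by
  rw [div_le_iff₀ (by linarith)]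
  nlinarith

lemma mul_pow_le_of_mul_pow_four_le {t η : ℝ} (ht0 : 0 ≤ t) (ht : 2 ≤ t ^ 2)
    (hη0 : 0 ≤ η) (hη : η * t ^ 4 ≤ 1 / 6) {k : ℕ} (hk : k ≤ 2) : η * t ^ k ≤ 1 / 12 := by
  have ht1 : 1 ≤ t := by nlinarith
  have hpow : 2 ≤ t ^ (4 - k) := ht.trans (pow_le_pow_right₀ ht1 (by omega))
  have hsplit : t ^ 4 = t ^ k * t ^ (4 - k) := by rw [← pow_add]; congr 1; omega
  nlinarith [mul_nonneg hη0 (pow_nonneg ht0 k)]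

lemma poly_error_le_of_two_le_sq {t : ℝ} (ht0 : 0 ≤ t) (ht : 2 ≤ t ^ 2) :
    2 / 33 * (t ^ 3 + t ^ 6) + 1 / 6 * (t ^ 2 + t ^ 6) ≤ (t ^ 4 - 1) * (t ^ 2 - 1) := by
  nlinarith [mul_nonneg (sub_nonneg.2 ht) (by positivity : (0:ℝ) ≤ t ^ 4),
      sq_nonneg (t ^ 2 - 77/64), mul_nonneg ht0 (sub_nonneg.2 ht),
      mul_nonneg (by positivity : (0:ℝ) ≤ t ^ 3) (sub_nonneg.2 ht)]

lemma error_terms_le_leading_term {t η : ℝ} (ht0 : 0 < t) (ht : 2 ≤ t ^ 2) (hη0 : 0 ≤ η)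
    (hη : η * t ^ 4 ≤ 1 / 6) :
    12 / 11 * ((η * t) ^ 4 + (η * t ^ 2) ^ 4 / t) + η ^ 3 / 6 * (3 / t + 3 * t ^ 3)
      ≤ η ^ 2 * (t ^ 4 - 1) * (1 - (t ^ 2)⁻¹) * t⁻¹ / (2 * t ^ 4) := by
  have hP := poly_error_le_of_two_le_sq ht0.le ht
  have hx2 : (η * t ^ 4) ^ 2 ≤ 1 / 36 := by nlinarith [mul_nonneg hη0 (pow_nonneg ht0.le 4)]
  rw [← sub_nonneg]
  have hrw : η ^ 2 * (t ^ 4 - 1) * (1 - (t ^ 2)⁻¹) * t⁻¹ / (2 * t ^ 4)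
        - (12 / 11 * ((η * t) ^ 4 + (η * t ^ 2) ^ 4 / t) + η ^ 3 / 6 * (3 / t + 3 * t ^ 3))
      = η ^ 2 * ((t ^ 4 - 1) * (t ^ 2 - 1)
          - 24 / 11 * (η * t ^ 4) ^ 2 * (t ^ 3 + t ^ 6) - η * t ^ 4 * (t ^ 2 + t ^ 6))
        / (2 * t ^ 7) := by
    field_simp
    ring
  rw [hrw]
  apply div_nonneg _ (by positivity)
  apply mul_nonneg (sq_nonneg η)
  -- the bracket decreases in `η * t ^ 4`; at `1 / 6` it is `poly_error_le_of_two_le_sq`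
  nlinarith [mul_le_mul_of_nonneg_right hx2 (by positivity : (0:ℝ) ≤ t ^ 3 + t ^ 6),
    mul_le_mul_of_nonneg_right hη (by positivity : (0:ℝ) ≤ t ^ 2 + t ^ 6)]

lemma higher_order_sum_le {t η x y : ℝ} (ht0 : 0 < t) (ht : 2 ≤ t ^ 2) (hη0 : 0 ≤ η)
    (hη : η * t ^ 4 ≤ 1 / 6) (hxy : x * y = t ^ 2) (b : ℕ) :
    ∑ m ∈ Icc 4 b, η ^ m * (t ^ m + t * x ^ (m - 1) * y ^ (m - 1))
      ≤ 12 / 11 * ((η * t) ^ 4 + (η * t ^ 2) ^ 4 / t) := by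
  have hr1 := mul_pow_le_of_mul_pow_four_le ht0.le ht hη0 hη (k := 1) (by norm_num)
  have hr2 := mul_pow_le_of_mul_pow_four_le ht0.le ht hη0 hη (k := 2) (by norm_num)
  rw [pow_one] at hr1
  have hgeom : ∑ m ∈ Icc 4 b, (η * t) ^ m ≤ (η * t) ^ 4 / (1 - η * t) := by
    rw [← Ico_add_one_right_eq_Icc]
    exact geom_sum_Ico_le_of_lt_one (by positivity) (by linarith)
  have hmixed := sum_Icc_pow_mul_pow_pred_le hη0 (by rw [hxy]; positivity)
    (by rw [hxy]; linarith) (by norm_num : 1 ≤ 4) b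
  rw [hxy] at hmixed
  have hsplit : ∑ m ∈ Icc 4 b, η ^ m * (t ^ m + t * x ^ (m - 1) * y ^ (m - 1))
      = ∑ m ∈ Icc 4 b, (η * t) ^ m
        + t * ∑ m ∈ Icc 4 b, η ^ m * x ^ (m - 1) * y ^ (m - 1) := by
    rw [mul_sum, ← sum_add_distrib]
    exact sum_congr rfl fun m _ => by ring
  rw [hsplit]
  calc _ ≤ (η * t) ^ 4 / (1 - η * t) + (η * t ^ 2) ^ 4 / t / (1 - η * t ^ 2) := by
        gcongr
        calc _ ≤ t * ((η * t ^ 2) ^ 4 / (t ^ 2 * (1 - η * t ^ 2))) := by gcongr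
          _ = _ := by field_simp
    _ ≤ _ := by
        rw [mul_add]
        gcongr
        · exact div_one_sub_le_of_le (by positivity) hr1
        · exact div_one_sub_le_of_le (by positivity) hr2

lemma mul_sum_Icc_pow_mul_pow_pred_le_one {t η x y : ℝ} (ht0 : 0 < t) (ht : 2 ≤ t ^ 2)
    (hη0 : 0 ≤ η) (hη : η * t ^ 4 ≤ 1 / 6) (hxy : x * y = t ^ 2) (b : ℕ) :
    t * ∑ m ∈ Icc 1 b, η ^ m * x ^ (m - 1) * y ^ (m - 1) ≤ 1 := by
  have hr1 := mul_pow_le_of_mul_pow_four_le ht0.le ht hη0 hη (k := 1) (by norm_num)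
  have hr2 := mul_pow_le_of_mul_pow_four_le ht0.le ht hη0 hη (k := 2) (by norm_num)
  rw [pow_one] at hr1
  have hsum := sum_Icc_pow_mul_pow_pred_le hη0 (by rw [hxy]; positivity)
    (by rw [hxy]; linarith) le_rfl b
  rw [hxy] at hsum
  calc _ ≤ t * ((η * t ^ 2) ^ 1 / (t ^ 2 * (1 - η * t ^ 2))) := by gcongr
    _ = η * t / (1 - η * t ^ 2) := by field_simp
    _ ≤ 12 / 11 * (η * t) := div_one_sub_le_of_le (by positivity) hr2
    _ ≤ 1 := by linarith

lemma cubic_coeff_le {t x δ : ℝ} (ht0 : 0 < t) (hx : x = t ^ 4) (hδ : δ = (t ^ 2)⁻¹) :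
    3 * t ^ 3 / x + t * √x * √(x ^ 2 * δ ^ 4 + 6 * x * δ ^ 2 + 1) ≤ 3 / t + 3 * t ^ 3 := by
  have hsqrt8 : √8 ≤ 3 := Real.sqrt_le_iff.2 ⟨by norm_num, by norm_num⟩
  have hsqrt : t * √x * √(x ^ 2 * δ ^ 4 + 6 * x * δ ^ 2 + 1) = √8 * t ^ 3 := by
    rw [hx, hδ, show t ^ 4 = (t ^ 2) ^ 2 by ring, Real.sqrt_sq (by positivity)]
    field_simp
    norm_num
  rw [hsqrt, hx, show 3 * t ^ 3 / t ^ 4 = 3 / t by field_simp]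
  gcongr

/-- For n ≥ 4, δ = n^{-1/2}, s_min = n^{-1/4}, s_max = n^{1/4}, and every
η ∈ [0, 1/(6n)], the two scalar quantities appearing in Lemma 5 (the lower bounds on
λ_min(W_GD − W_RS) and λ_min(W_RS)) are nonnegative. -/
theorem statement9 (n : ℕ) (hn : 4 ≤ n) (δ smin smax : ℝ)
    (hδ : δ = (n : ℝ) ^ (-(1 / 2) : ℝ))
    (hsmin : smin = (n : ℝ) ^ (-(1 / 4) : ℝ))
    (hsmax : smax = (n : ℝ) ^ ((1 / 4) : ℝ)) :
    ∀ η ∈ Set.Icc (0 : ℝ) (1 / (6 * (n : ℝ))),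
      (0 ≤ η ^ 2 * ((n : ℝ) - 1) * (1 - δ) * smin / (2 * (n : ℝ))
          - ∑ m ∈ Finset.Icc 4 n, η ^ m * (smax ^ m + smax * (n : ℝ) ^ (m - 1) * δ ^ (m - 1))
          - (η ^ 3 / 6) * (3 * smax ^ 3 / (n : ℝ)
              + smax * Real.sqrt (n : ℝ) *
                Real.sqrt ((n : ℝ) ^ 2 * δ ^ 4 + 6 * (n : ℝ) * δ ^ 2 + 1)))
      ∧ 0 ≤ 1 - smax * ∑ m ∈ Finset.Icc 1 n, η ^ m * (n : ℝ) ^ (m - 1) * δ ^ (m - 1) := by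
  rintro η ⟨hη0, hη⟩
  have hn0 : (0 : ℝ) < n := by positivity
  have ht0 : 0 < smax := by rw [hsmax]; positivity
  have hn_eq : (n : ℝ) = smax ^ 4 := by
    rw [hsmax, ← Real.rpow_natCast, ← Real.rpow_mul hn0.le]; norm_num
  have hδ_eq : δ = (smax ^ 2)⁻¹ := by
    rw [hδ, hsmax, ← Real.rpow_natCast, ← Real.rpow_mul hn0.le, ← Real.rpow_neg hn0.le]; norm_num
  have hsmin_eq : smin = smax⁻¹ := by rw [hsmin, hsmax, Real.rpow_neg hn0.le]
  have ht : 2 ≤ smax ^ 2 := by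
    have h4 : (4 : ℝ) ≤ smax ^ 4 := hn_eq ▸ (by exact_mod_cast hn)
    nlinarith [sq_nonneg (smax ^ 2 + 2)]
  have hηt : η * smax ^ 4 ≤ 1 / 6 := by
    rw [← hn_eq]; rw [le_div_iff₀ (by positivity)] at hη; linarith
  have hnδ : (n : ℝ) * δ = smax ^ 2 := by rw [hn_eq, hδ_eq]; field_simp
  refine ⟨?_, by linarith [mul_sum_Icc_pow_mul_pow_pred_le_one ht0 ht hη0 hηt hnδ n]⟩
  have hcubic := cubic_coeff_le ht0 hn_eq hδ_eq
  have hleading : η ^ 2 * ((n : ℝ) - 1) * (1 - δ) * smin / (2 * n)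
      = η ^ 2 * (smax ^ 4 - 1) * (1 - (smax ^ 2)⁻¹) * smax⁻¹ / (2 * smax ^ 4) := by
    rw [hn_eq, hδ_eq, hsmin_eq]
  rw [hleading]
  linarith [higher_order_sum_le ht0 ht hη0 hηt hnδ n, error_terms_le_leading_term ht0 ht hη0 hηt,
    mul_le_mul_of_nonneg_left hcubic (by positivity : (0 : ℝ) ≤ η ^ 3 / 6)]
end

section
/- Define the 2×2 real symmetric positive semidefinite matrices A_1 = [[1/4, √3/4], [√3/4, 3/4]], A_2 = [[1/4, −√3/4], [−√3/4, 3/4]], A_3 = [[1, 0], [0, 0]]. Then for every integer K ≥ 1, (1/6) Σ_{σ∈S_3} (A_{σ(1)} A_{σ(2)} A_{σ(3)})^K = (−1/8)^K · (1/2) · I, where I is the 2×2 identity matrix and S_3 is the set of all permutations of {1,2,3}. -/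
open Matrix

/-- The three 2×2 positive semidefinite matrices of the counterexample. -/
noncomputable def cexA : Fin 3 → Matrix (Fin 2) (Fin 2) ℝ :=
  ![!![1 / 4, Real.sqrt 3 / 4; Real.sqrt 3 / 4, 3 / 4],
    !![1 / 4, -(Real.sqrt 3) / 4; -(Real.sqrt 3) / 4, 3 / 4],
    !![1, 0; 0, 0]]

set_option maxHeartbeats 1600000 in
lemma cex_sq' (i j k : Fin 3) (hij : i ≠ j) (hjk : j ≠ k) (hik : i ≠ k) :
    (cexA i * cexA j * cexA k) ^ 2 = (-1 / 8 : ℝ) • (cexA i * cexA j * cexA k) := by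
  fin_cases i <;> fin_cases j <;> fin_cases k <;>
    first
    | exact absurd rfl (by assumption)
    | · have h2 : Real.sqrt 3 ^ 2 = 3 := Real.sq_sqrt (by norm_num)
        have h3c : Real.sqrt 3 ^ 3 = 3 * Real.sqrt 3 := by rw [pow_succ, h2]
        have h4 : Real.sqrt 3 ^ 4 = 9 := by
          have : Real.sqrt 3 ^ 4 = (Real.sqrt 3 ^ 2) ^ 2 := by ring
          rw [this, h2]; norm_num
        ext a b
        fin_cases a <;> fin_cases b <;>
          simp [cexA, pow_two, Matrix.mul_fin_two, Matrix.smul_apply,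
            -mul_eq_mul_right_iff, -mul_eq_mul_left_iff] <;>
          (ring_nf; linarith [h2, h3c, h4])

lemma cex_sq (σ : Equiv.Perm (Fin 3)) :
    (cexA (σ 0) * cexA (σ 1) * cexA (σ 2)) ^ 2 =
      (-1 / 8 : ℝ) • (cexA (σ 0) * cexA (σ 1) * cexA (σ 2)) :=
  cex_sq' _ _ _ (σ.injective.ne (by decide)) (σ.injective.ne (by decide))
    (σ.injective.ne (by decide))

lemma cex_pow (σ : Equiv.Perm (Fin 3)) (K : ℕ) (hK : 1 ≤ K) :
    (cexA (σ 0) * cexA (σ 1) * cexA (σ 2)) ^ K =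
      ((-1 / 8 : ℝ) ^ (K - 1)) • (cexA (σ 0) * cexA (σ 1) * cexA (σ 2)) := by
  obtain ⟨n, rfl⟩ : ∃ n, K = n + 1 := ⟨K - 1, (Nat.succ_pred_eq_of_pos hK).symm⟩
  induction n with
  | zero => simp
  | succ m ih =>
      have ihm := ih (Nat.le_add_left 1 m)
      rw [pow_succ, ihm]
      simp only [Nat.add_sub_cancel] at *
      rw [Matrix.smul_mul, ← pow_two, cex_sq, smul_smul, pow_succ]

set_option maxHeartbeats 1600000 in
lemma cex_base_sum :
    ∑ σ : Equiv.Perm (Fin 3), (cexA (σ 0) * cexA (σ 1) * cexA (σ 2)) =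
      (-3 / 8 : ℝ) • (1 : Matrix (Fin 2) (Fin 2) ℝ) := by
  have h2 : Real.sqrt 3 ^ 2 = 3 := Real.sq_sqrt (by norm_num)
  have he : Function.Bijective
      (![1, Equiv.swap 0 1, Equiv.swap 0 2, Equiv.swap 1 2,
        Equiv.swap 0 1 * Equiv.swap 1 2, Equiv.swap 1 2 * Equiv.swap 0 1] :
        Fin 6 → Equiv.Perm (Fin 3)) := by decide
  rw [← Fintype.sum_bijective _ he _
      (fun σ => cexA (σ 0) * cexA (σ 1) * cexA (σ 2)) (fun x => rfl)]
  rw [Fin.sum_univ_six]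
  simp only [
    show (![1, Equiv.swap 0 1, Equiv.swap 0 2, Equiv.swap 1 2,
      Equiv.swap 0 1 * Equiv.swap 1 2, Equiv.swap 1 2 * Equiv.swap 0 1] :
      Fin 6 → Equiv.Perm (Fin 3)) 5 = Equiv.swap 1 2 * Equiv.swap 0 1 from rfl,
    show (![1, Equiv.swap 0 1, Equiv.swap 0 2, Equiv.swap 1 2,
      Equiv.swap 0 1 * Equiv.swap 1 2, Equiv.swap 1 2 * Equiv.swap 0 1] :
      Fin 6 → Equiv.Perm (Fin 3)) 4 = Equiv.swap 0 1 * Equiv.swap 1 2 from rfl,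
    Matrix.cons_val_zero, Matrix.cons_val_one, Matrix.head_cons,
    Matrix.cons_val_two, Matrix.tail_cons, Matrix.cons_val_three, Matrix.cons_val_four,
    Matrix.cons_val_succ, Matrix.head_fin_const,
    show ((1 : Equiv.Perm (Fin 3)) 0) = 0 from rfl,
    show ((1 : Equiv.Perm (Fin 3)) 1) = 1 from rfl,
    show ((1 : Equiv.Perm (Fin 3)) 2) = 2 from rfl,
    show ((Equiv.swap 0 1 : Equiv.Perm (Fin 3)) 0) = 1 from by decide,
    show ((Equiv.swap 0 1 : Equiv.Perm (Fin 3)) 1) = 0 from by decide,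
    show ((Equiv.swap 0 1 : Equiv.Perm (Fin 3)) 2) = 2 from by decide,
    show ((Equiv.swap 0 2 : Equiv.Perm (Fin 3)) 0) = 2 from by decide,
    show ((Equiv.swap 0 2 : Equiv.Perm (Fin 3)) 1) = 1 from by decide,
    show ((Equiv.swap 0 2 : Equiv.Perm (Fin 3)) 2) = 0 from by decide,
    show ((Equiv.swap 1 2 : Equiv.Perm (Fin 3)) 0) = 0 from by decide,
    show ((Equiv.swap 1 2 : Equiv.Perm (Fin 3)) 1) = 2 from by decide,
    show ((Equiv.swap 1 2 : Equiv.Perm (Fin 3)) 2) = 1 from by decide,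
    show ((Equiv.swap 0 1 * Equiv.swap 1 2 : Equiv.Perm (Fin 3)) 0) = 1 from by decide,
    show ((Equiv.swap 0 1 * Equiv.swap 1 2 : Equiv.Perm (Fin 3)) 1) = 2 from by decide,
    show ((Equiv.swap 0 1 * Equiv.swap 1 2 : Equiv.Perm (Fin 3)) 2) = 0 from by decide,
    show ((Equiv.swap 1 2 * Equiv.swap 0 1 : Equiv.Perm (Fin 3)) 0) = 2 from by decide,
    show ((Equiv.swap 1 2 * Equiv.swap 0 1 : Equiv.Perm (Fin 3)) 1) = 0 from by decide,
    show ((Equiv.swap 1 2 * Equiv.swap 0 1 : Equiv.Perm (Fin 3)) 2) = 1 from by decide]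
  ext a b
  fin_cases a <;> fin_cases b <;>
    simp [cexA, Matrix.mul_fin_two, Matrix.smul_apply, Matrix.add_apply, Matrix.one_apply,
      -mul_eq_mul_right_iff, -mul_eq_mul_left_iff] <;>
    ring_nf <;> linarith [h2]

/-- For every K ≥ 1,
(1/6) Σ_{σ ∈ S₃} (A_{σ(1)} A_{σ(2)} A_{σ(3)})^K = (−1/8)^K · (1/2) · I. -/
theorem statement10 (K : ℕ) (hK : 1 ≤ K) :
    (1 / 6 : ℝ) • ∑ σ : Equiv.Perm (Fin 3), (cexA (σ 0) * cexA (σ 1) * cexA (σ 2)) ^ K =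
      ((-1 / 8 : ℝ) ^ K * (1 / 2)) • (1 : Matrix (Fin 2) (Fin 2) ℝ) := by
  have h : ∑ σ : Equiv.Perm (Fin 3), (cexA (σ 0) * cexA (σ 1) * cexA (σ 2)) ^ K =
      ((-1 / 8 : ℝ) ^ (K - 1)) •
        ∑ σ : Equiv.Perm (Fin 3), (cexA (σ 0) * cexA (σ 1) * cexA (σ 2)) := by
    rw [Finset.smul_sum]
    exact Finset.sum_congr rfl fun σ _ => cex_pow σ K hK
  rw [h, cex_base_sum, smul_smul, smul_smul]
  congr 1
  obtain ⟨n, rfl⟩ : ∃ n, K = n + 1 := ⟨K - 1, (Nat.succ_pred_eq_of_pos hK).symm⟩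
  simp only [Nat.add_sub_cancel, pow_succ]
  ring
end

section
/- Define the 2×2 real symmetric positive semidefinite matrices A_1 = [[1/4, √3/4], [√3/4, 3/4]], A_2 = [[1/4, −√3/4], [−√3/4, 3/4]], A_3 = [[1, 0], [0, 0]]. Then for every integer K ≥ 2, ‖W_SS(3,K,A_1,A_2,A_3)‖ = 1/(2·8^K) > 1/16^K = ‖W_RS(3,K,A_1,A_2,A_3)‖; in particular, the inequality ‖W_SS‖ ≤ ‖W_RS‖ fails for these positive semidefinite matrices whenever K ≥ 2. -/
open Matrix

theorem Matrix.mul_self_fin_two {R : Type*} [CommRing R] (M : Matrix (Fin 2) (Fin 2) R) :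
    M * M = M.trace • M - M.det • 1 := by
  ext i j
  fin_cases i <;> fin_cases j <;>
    simp [mul_apply, Fin.sum_univ_two, det_fin_two, trace_fin_two] <;> ring

theorem pow_succ_eq_smul_of_mul_self_eq_smul {S R : Type*} [CommSemiring S] [Semiring R]
    [Algebra S R] {M : R} {t : S} (h : M * M = t • M) (k : ℕ) : M ^ (k + 1) = t ^ k • M := by
  induction k with
  | zero => simp
  | succ k ih => rw [pow_succ, ih, smul_mul_assoc, h, smul_smul, pow_succ]

theorem Matrix.trace_mul_mul_rev_of_isSymm {m R : Type*} [Fintype m] [CommSemiring R]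
    {A B C : Matrix m m R} (hA : A.IsSymm) (hB : B.IsSymm) (hC : C.IsSymm) :
    (A * B * C).trace = (C * B * A).trace := by
  rw [← trace_transpose, transpose_mul, transpose_mul, hA.eq, hB.eq, hC.eq, mul_assoc]

lemma Finset.univ_perm_fin_three : (Finset.univ : Finset (Equiv.Perm (Fin 3))) =
    {1, Equiv.swap 0 1, Equiv.swap 0 2, Equiv.swap 1 2,
     Equiv.swap 0 1 * Equiv.swap 1 2, Equiv.swap 1 2 * Equiv.swap 0 1} := by decide

lemma Equiv.Perm.fin_three_cases (σ : Equiv.Perm (Fin 3)) :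
    (σ 0, σ 1, σ 2) = (0, 1, 2) ∨ (σ 0, σ 1, σ 2) = (1, 2, 0) ∨ (σ 0, σ 1, σ 2) = (2, 0, 1) ∨
    (σ 0, σ 1, σ 2) = (2, 1, 0) ∨ (σ 0, σ 1, σ 2) = (0, 2, 1) ∨ (σ 0, σ 1, σ 2) = (1, 0, 2) := by
  revert σ; decide

lemma specNorm_smul_one {d : ℕ} [NeZero d] (c : ℝ) :
    specNorm (c • (1 : Matrix (Fin d) (Fin d) ℝ)) = |c| := by
  rw [specNorm, map_smul, map_one, norm_smul, norm_one, mul_one, Real.norm_eq_abs]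

section permProd

variable {n d : ℕ}

lemma det_permProd (A : Fin n → Matrix (Fin d) (Fin d) ℝ) (σ : Equiv.Perm (Fin n)) :
    (permProd A σ).det = ∏ i, (A i).det := by
  rw [permProd, ← coe_detMonoidHom, map_list_prod, List.map_ofFn, List.prod_ofFn]
  exact Equiv.prod_comp σ fun i => (A i).det

lemma WSS_succ_of_mul_self {A : Fin n → Matrix (Fin d) (Fin d) ℝ} {t : ℝ}
    (h : ∀ σ, permProd A σ * permProd A σ = t • permProd A σ) (k : ℕ) :
    WSS n (k + 1) A = t ^ k • ((n.factorial : ℝ)⁻¹ • ∑ σ, permProd A σ) := by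
  simp only [WSS, pow_succ_eq_smul_of_mul_self_eq_smul (h _), ← Finset.smul_sum]
  exact smul_comm _ _ _

lemma permProd_fin_three (A : Fin 3 → Matrix (Fin d) (Fin d) ℝ) (σ : Equiv.Perm (Fin 3)) :
    permProd A σ = A (σ 0) * A (σ 1) * A (σ 2) := by
  simp [permProd, List.ofFn_succ, mul_assoc]

lemma trace_permProd_fin_three {A : Fin 3 → Matrix (Fin d) (Fin d) ℝ} (hA : ∀ i, (A i).IsSymm)
    (σ : Equiv.Perm (Fin 3)) : (permProd A σ).trace = (A 0 * A 1 * A 2).trace := by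
  have hrev := fun i j k => trace_mul_mul_rev_of_isSymm (hA i) (hA j) (hA k)
  rw [permProd_fin_three]
  rcases σ.fin_three_cases with h | h | h | h | h | h <;> simp only [Prod.mk.injEq] at h <;>
    rw [h.1, h.2.1, h.2.2]
  -- the identity case is already closed by this `rw`; the rest are rotations and reversals
  · rw [trace_mul_cycle]
  · rw [← trace_mul_cycle]
  · rw [hrev]
  · rw [hrev, trace_mul_cycle]
  · rw [hrev, ← trace_mul_cycle]

end permProd

lemma cexA_isSymm (i : Fin 3) : (cexA i).IsSymm := by
  refine IsSymm.ext fun j k => ?_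
  fin_cases i <;> fin_cases j <;> fin_cases k <;> simp [cexA]

lemma det_cexA_two : (cexA 2).det = 0 := by
  simp [cexA, det_fin_two]

lemma trace_cexA_mul : (cexA 0 * cexA 1 * cexA 2).trace = -1 / 8 := by
  have h3 : Real.sqrt 3 ^ 2 = 3 := Real.sq_sqrt (by norm_num)
  simp [cexA, trace_fin_two]
  ring_nf
  norm_num [h3]

lemma permProd_cexA_mul_self (σ : Equiv.Perm (Fin 3)) :
    permProd cexA σ * permProd cexA σ = (-1 / 8 : ℝ) • permProd cexA σ := by
  have hdet : (permProd cexA σ).det = 0 := by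
    rw [det_permProd]
    exact Finset.prod_eq_zero (Finset.mem_univ 2) det_cexA_two
  rw [mul_self_fin_two, trace_permProd_fin_three cexA_isSymm, trace_cexA_mul, hdet, zero_smul,
    sub_zero]

lemma sum_permProd_cexA : ∑ σ, permProd cexA σ = (-3 / 8 : ℝ) • 1 := by
  have h3 : Real.sqrt 3 ^ 2 = 3 := Real.sq_sqrt (by norm_num)
  simp +decide [Finset.univ_perm_fin_three, Finset.sum_insert, permProd_fin_three,
    Equiv.swap_apply_of_ne_of_ne, cexA]
  ext i j
  fin_cases i <;> fin_cases j <;> simp <;> ring_nf <;> norm_num [h3]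

lemma WSS_cexA {K : ℕ} (hK : K ≠ 0) : WSS 3 K cexA = (1 / 2 * (-1 / 8) ^ K : ℝ) • 1 := by
  obtain ⟨k, rfl⟩ := Nat.exists_eq_succ_of_ne_zero hK
  rw [WSS_succ_of_mul_self permProd_cexA_mul_self, sum_permProd_cexA, smul_smul, smul_smul]
  congr 1
  norm_num [Nat.factorial, pow_succ]
  ring

lemma WRS_cexA (K : ℕ) : WRS 3 K cexA = ((-1 / 16) ^ K : ℝ) • 1 := by
  rw [WRS, sum_permProd_cexA, smul_smul, smul_pow, one_pow]
  norm_num [Nat.factorial]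

/-- For every K ≥ 2, ‖W_SS(3,K,A₁,A₂,A₃)‖ = 1/(2·8^K) > 1/16^K
 = ‖W_RS(3,K,A₁,A₂,A₃)‖; in particular ‖W_SS‖ ≤ ‖W_RS‖ fails. -/
theorem statement11 (K : ℕ) (hK : 2 ≤ K) :
    specNorm (WSS 3 K cexA) = 1 / (2 * 8 ^ K) ∧
    (1 / (16 ^ K) : ℝ) < 1 / (2 * 8 ^ K) ∧
    specNorm (WRS 3 K cexA) = 1 / (16 ^ K) ∧
    ¬ specNorm (WSS 3 K cexA) ≤ specNorm (WRS 3 K cexA) := by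
  have hSS : specNorm (WSS 3 K cexA) = 1 / (2 * 8 ^ K) := by
    rw [WSS_cexA (by omega), specNorm_smul_one, abs_mul, abs_pow]
    norm_num [div_pow, mul_comm]
  have hRS : specNorm (WRS 3 K cexA) = 1 / 16 ^ K := by
    rw [WRS_cexA, specNorm_smul_one, abs_pow]
    norm_num [div_pow]
  have hlt : (1 / 16 ^ K : ℝ) < 1 / (2 * 8 ^ K) := by
    have h2 : (2 : ℝ) < 2 ^ K := by simpa using pow_lt_pow_right₀ one_lt_two hK
    apply one_div_lt_one_div_of_lt (by positivity)
    rw [show (16 : ℝ) ^ K = 2 ^ K * 8 ^ K by rw [← mul_pow]; norm_num]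
    gcongr
  exact ⟨hSS, hlt, hRS, by rw [hSS, hRS]; exact not_le_of_gt hlt⟩
end

section
/- For any real numbers a, b, c, d and any θ ∈ ℝ, the complex 2×2 matrix cos θ · [[a, b], [b, c]] + i sin θ · [[0, d], [−d, 0]] has spectral norm satisfying 2‖·‖^2 = (a^2 + 2b^2 + c^2) cos^2 θ + 2 d^2 sin^2 θ + √((a^2 − c^2)^2 cos^4 θ + 4 (a + c)^2 cos^2 θ (b^2 cos^2 θ + d^2 sin^2 θ)). -/
/-- Spectral norm (operator 2-norm) of a complex square matrix. -/
noncomputable def specNormC {d : ℕ} (M : Matrix (Fin d) (Fin d) ℂ) : ℝ :=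
  ‖Matrix.toEuclideanCLM (𝕜 := ℂ) M‖

open Matrix in
/-- Spectrum of the Hermitian matrix `!![x+e, f; conj f, x-e]`. -/
theorem spec2_aux (x e : ℝ) (f : ℂ) (z : ℂ) :
    z ∈ spectrum ℂ (!![(x:ℂ)+e, f; starRingEnd ℂ f, (x:ℂ)-e]) ↔
      (z - x)^2 = ((e^2 + Complex.normSq f : ℝ) : ℂ) := by
  rw [spectrum.mem_iff, Matrix.isUnit_iff_isUnit_det, isUnit_iff_ne_zero, not_not,
    Matrix.det_fin_two]
  simp [Matrix.algebraMap_eq_diagonal]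
  rw [← Complex.mul_conj]
  constructor <;> intro h <;> linear_combination h

theorem abs_sup_abs_aux (x κ : ℝ) (hκ0 : 0 ≤ κ) : |x + κ| ⊔ |x - κ| = |x| + κ := by
  rcases le_or_gt 0 x with hx | hx
  · rw [abs_of_nonneg hx, abs_of_nonneg (by linarith : (0:ℝ) ≤ x + κ),
      sup_eq_left.mpr (abs_le.mpr ⟨by linarith, by linarith⟩)]
  · rw [abs_of_neg hx, abs_of_nonpos (by linarith : x - κ ≤ 0),
      sup_eq_right.mpr (abs_le.mpr ⟨by linarith, by linarith⟩)]
    ring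

open Matrix in
/-- Spectral norm of the Hermitian matrix `!![x+e, f; conj f, x-e]`. -/
theorem normHerm2 (x e : ℝ) (f : ℂ) :
    specNormC !![(x:ℂ)+e, f; starRingEnd ℂ f, (x:ℂ)-e]
      = |x| + Real.sqrt (e^2 + Complex.normSq f) := by
  set κ : ℝ := Real.sqrt (e^2 + Complex.normSq f) with hκ
  have hκ0 : 0 ≤ κ := Real.sqrt_nonneg _
  have hκsq : (κ:ℝ)^2 = e^2 + Complex.normSq f :=
    Real.sq_sqrt (add_nonneg (sq_nonneg e) (Complex.normSq_nonneg f))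
  set M : Matrix (Fin 2) (Fin 2) ℂ := !![(x:ℂ)+e, f; starRingEnd ℂ f, (x:ℂ)-e] with hM
  have hspec : spectrum ℂ M = {((x:ℂ) + κ), ((x:ℂ) - κ)} := by
    ext z
    rw [spec2_aux]
    have : ((e^2 + Complex.normSq f : ℝ) : ℂ) = ((κ:ℂ))^2 := by
      rw [← hκsq]; push_cast; ring
    rw [this, sq_eq_sq_iff_eq_or_eq_neg]
    simp only [Set.mem_insert_iff, Set.mem_singleton_iff]
    constructor
    · rintro (h | h)
      · left; linear_combination h
      · right; linear_combination h
    · rintro (h | h)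
      · left; linear_combination h
      · right; linear_combination h
  have hsa : _root_.IsSelfAdjoint (Matrix.toEuclideanCLM (𝕜 := ℂ) M) := by
    rw [_root_.IsSelfAdjoint, ← map_star]
    congr 1
    ext i j
    fin_cases i <;> fin_cases j <;>
      simp [hM, Matrix.star_eq_conjTranspose, Matrix.conjTranspose_apply]
  have hrad := hsa.spectralRadius_eq_nnnorm
  rw [spectralRadius, AlgEquiv.spectrum_eq, hspec] at hrad
  rw [show ({((x:ℂ) + κ), ((x:ℂ) - κ)} : Set ℂ) = insert ((x:ℂ)+κ) {((x:ℂ)-κ)} from rfl,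
    iSup_insert, iSup_singleton] at hrad
  have hnn : ‖Matrix.toEuclideanCLM (𝕜 := ℂ) M‖ = ‖(x:ℂ) + κ‖ ⊔ ‖(x:ℂ) - κ‖ := by
    have := congrArg ENNReal.toReal hrad
    rw [ENNReal.toReal_sup (by simp) (by simp)] at this
    simp only [ENNReal.coe_toReal, coe_nnnorm] at this
    exact this.symm
  have h1 : ‖(x:ℂ) + (κ:ℂ)‖ = |x + κ| := by
    rw [show ((x:ℂ) + κ) = ((x + κ : ℝ) : ℂ) by push_cast; ring, Complex.norm_real,
      Real.norm_eq_abs]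
  have h2 : ‖(x:ℂ) - (κ:ℂ)‖ = |x - κ| := by
    rw [show ((x:ℂ) - κ) = ((x - κ : ℝ) : ℂ) by push_cast; ring, Complex.norm_real,
      Real.norm_eq_abs]
  have : specNormC M = |x + κ| ⊔ |x - κ| := by
    rw [specNormC, hnn, h1, h2]
  rw [this, abs_sup_abs_aux _ _ hκ0]

/-- For real a, b, c, d and θ ∈ ℝ, the spectral norm of
cos θ · [[a,b],[b,c]] + i sin θ · [[0,d],[−d,0]] satisfies
2‖·‖² = (a² + 2b² + c²)cos²θ + 2d²sin²θ
        + √((a² − c²)²cos⁴θ + 4(a+c)²cos²θ(b²cos²θ + d²sin²θ)). -/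
theorem statement16 (a b c d θ : ℝ) :
    2 * specNormC ((Real.cos θ : ℂ) • !![(a : ℂ), (b : ℂ); (b : ℂ), (c : ℂ)]
        + (Complex.I * (Real.sin θ : ℂ)) • !![0, (d : ℂ); (-d : ℂ), 0]) ^ 2 =
      (a ^ 2 + 2 * b ^ 2 + c ^ 2) * Real.cos θ ^ 2 + 2 * d ^ 2 * Real.sin θ ^ 2
        + Real.sqrt ((a ^ 2 - c ^ 2) ^ 2 * Real.cos θ ^ 4
            + 4 * (a + c) ^ 2 * Real.cos θ ^ 2
              * (b ^ 2 * Real.cos θ ^ 2 + d ^ 2 * Real.sin θ ^ 2)) := by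
  set P := Real.cos θ
  set S := Real.sin θ
  have hmat : ((P : ℂ) • !![(a : ℂ), (b : ℂ); (b : ℂ), (c : ℂ)]
        + (Complex.I * (S : ℂ)) • !![0, (d : ℂ); (-d : ℂ), 0])
      = !![(((a+c)*P/2 : ℝ) : ℂ) + (((a-c)*P/2 : ℝ) : ℂ),
            ((b*P : ℝ) : ℂ) + ((d*S : ℝ) : ℂ) * Complex.I;
          starRingEnd ℂ (((b*P : ℝ) : ℂ) + ((d*S : ℝ) : ℂ) * Complex.I),
            (((a+c)*P/2 : ℝ) : ℂ) - (((a-c)*P/2 : ℝ) : ℂ)] := by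
    ext i j
    fin_cases i <;> fin_cases j <;>
      simp [Matrix.smul_apply, Complex.ext_iff] <;> ring_nf <;> simp
  rw [hmat, normHerm2]
  rw [Complex.normSq_add_mul_I]
  have hK0 : (0:ℝ) ≤ ((a-c)*P/2)^2 + ((b*P)^2 + (d*S)^2) := by positivity
  have hW : (a ^ 2 - c ^ 2) ^ 2 * P ^ 4 + 4 * (a + c) ^ 2 * P ^ 2
        * (b ^ 2 * P ^ 2 + d ^ 2 * S ^ 2)
      = (4*((a+c)*P/2))^2 * (((a-c)*P/2)^2 + ((b*P)^2 + (d*S)^2)) := by ring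
  rw [hW, Real.sqrt_mul (sq_nonneg _), Real.sqrt_sq_eq_abs, abs_mul]
  have h4 : |(4:ℝ)| = 4 := by norm_num
  rw [h4]
  have hs := Real.sq_sqrt hK0
  set Q := Real.sqrt (((a-c)*P/2)^2 + ((b*P)^2 + (d*S)^2))
  have ha := sq_abs ((a+c)*P/2)
  nlinarith [hs, ha]
end

section
/- Let M_1, …, M_n be real symmetric d×d matrices, and for a permutation σ of {1,…,n} define e_2(σ) := Σ_{1 ≤ i < j ≤ n} M_{σ(i)} M_{σ(j)}. Then for any two permutations σ and σ̃ of {1,…,n}, the matrix e_2(σ) − e_2(σ̃) is skew-symmetric, i.e., (e_2(σ) − e_2(σ̃))^T = −(e_2(σ) − e_2(σ̃)). -/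
open Matrix

/-- The noncommutative second elementary symmetric polynomial associated to a permutation σ:
`e₂(σ) = Σ_{i < j} M_{σ(i)} M_{σ(j)}`. -/
noncomputable def e2 {n d : ℕ} (M : Fin n → Matrix (Fin d) (Fin d) ℝ)
    (σ : Equiv.Perm (Fin n)) : Matrix (Fin d) (Fin d) ℝ :=
  ∑ i : Fin n, ∑ j : Fin n, if i < j then M (σ i) * M (σ j) else 0

lemma e2_add_transpose {n d : ℕ} (M : Fin n → Matrix (Fin d) (Fin d) ℝ)
    (hsymm : ∀ i, (M i).IsSymm) (σ : Equiv.Perm (Fin n)) :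
    e2 M σ + (e2 M σ)ᵀ = ∑ i : Fin n, ∑ j : Fin n, if i ≠ j then M i * M j else 0 := by
  have hT : (e2 M σ)ᵀ = ∑ i : Fin n, ∑ j : Fin n,
      if j < i then M (σ i) * M (σ j) else 0 := by
    unfold e2
    rw [Finset.sum_comm]
    simp only [transpose_sum]
    refine Finset.sum_congr rfl fun j _ => Finset.sum_congr rfl fun i _ => ?_
    split <;> simp [transpose_mul, (hsymm _).eq]
  have hmain : e2 M σ + (e2 M σ)ᵀ = ∑ i : Fin n, ∑ j : Fin n,
      if i ≠ j then M (σ i) * M (σ j) else 0 := by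
    rw [hT]
    unfold e2
    rw [← Finset.sum_add_distrib]
    refine Finset.sum_congr rfl fun i _ => ?_
    rw [← Finset.sum_add_distrib]
    refine Finset.sum_congr rfl fun j _ => ?_
    rcases lt_trichotomy i j with h | h | h
    · simp [h, not_lt_of_gt h, h.ne]
    · simp [h]
    · simp [h, not_lt_of_gt h, h.ne']
  rw [hmain]
  rw [← Equiv.sum_comp σ (fun i => ∑ j : Fin n, if i ≠ j then M i * M j else 0)]
  refine Finset.sum_congr rfl fun i _ => ?_
  rw [← Equiv.sum_comp σ (fun j => if σ i ≠ j then M (σ i) * M j else 0)]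
  refine Finset.sum_congr rfl fun j _ => ?_
  simp [EmbeddingLike.apply_eq_iff_eq]

/-- For symmetric M₁,…,M_n and any permutations σ, σ̃,
the matrix e₂(σ) − e₂(σ̃) is skew-symmetric. -/
theorem statement17 (n d : ℕ) (M : Fin n → Matrix (Fin d) (Fin d) ℝ)
    (hsymm : ∀ i, (M i).IsSymm) (σ σ' : Equiv.Perm (Fin n)) :
    (e2 M σ - e2 M σ')ᵀ = -(e2 M σ - e2 M σ') := by
  have h := (e2_add_transpose M hsymm σ).trans (e2_add_transpose M hsymm σ').symm
  rw [transpose_sub]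
  linear_combination (norm := abel) h
end

section
/- Let x_1, …, x_n ∈ ℝ^d be unit vectors satisfying |x_i^T x_j| ≤ δ for all i ≠ j, and let s_min be the minimum eigenvalue of Σ_{i=1}^n x_i x_i^T. Then (n−1) Σ_{i=1}^n x_i x_i^T − Σ_{i, j ∈ [n], i ≠ j} x_i x_i^T x_j x_j^T ⪰ (n−1)(1−δ) s_min · I; equivalently, for every unit vector u ∈ ℝ^d, (n−1) Σ_{i=1}^n (u^T x_i)^2 − Σ_{i ≠ j} (x_i^T x_j)(u^T x_i)(u^T x_j) ≥ (n−1)(1−δ) s_min. -/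
/-!
Write `aᵢ = uᵀxᵢ` and `cᵢⱼ = xᵢᵀxⱼ`. Besides `|cᵢⱼ| ≤ δ`, Cauchy–Schwarz gives `|cᵢⱼ| ≤ 1`, so
with `η = min δ 1` the AM–GM bound `cᵢⱼ aᵢ aⱼ ≤ η (aᵢ² + aⱼ²) / 2` sums to
`Σ_{i≠j} cᵢⱼ aᵢ aⱼ ≤ η (n - 1) Σ aᵢ²`. Hence the left side is at least `(n - 1)(1 - η) Σ aᵢ²`, and
`Σ aᵢ² = uᵀ(Σ xᵢxᵢᵀ)u ≥ s_min ≥ 0` by the spectral theorem. The matrix form is the same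
inequality for the quadratic forms.
-/

open Matrix
open scoped ComplexOrder

namespace Matrix

variable {α ι n : Type*} [Fintype n]

theorem dotProduct_mulVec_vecMulVec_mul_vecMulVec [CommSemiring α] (a b v : n → α) :
    v ⬝ᵥ ((vecMulVec a a * vecMulVec b b) *ᵥ v) = (a ⬝ᵥ b) * (v ⬝ᵥ a) * (v ⬝ᵥ b) := by
  simp only [vecMulVec_mul_vecMulVec, vecMulVec_mulVec, op_smul_eq_smul, dotProduct_smul,
    smul_dotProduct, smul_eq_mul, dotProduct_comm b v]
  ring

theorem dotProduct_mulVec_vecMulVec_self [CommSemiring α] (a v : n → α) :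
    v ⬝ᵥ (vecMulVec a a *ᵥ v) = (v ⬝ᵥ a) ^ 2 := by
  rw [vecMulVec_mulVec, op_smul_eq_smul, dotProduct_smul, smul_eq_mul, dotProduct_comm a v, sq]

theorem isHermitian_sum_offDiag_mul [Fintype ι] [DecidableEq ι] [NonUnitalSemiring α] [StarRing α]
    {A : ι → Matrix n n α} (hA : ∀ i, (A i).IsHermitian) :
    (∑ i, ∑ j, if i ≠ j then A i * A j else 0).IsHermitian := by
  simp only [IsHermitian, conjTranspose_sum, apply_ite conjTranspose, conjTranspose_zero,
    conjTranspose_mul, (hA _).eq]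
  rw [Finset.sum_comm]
  exact Finset.sum_congr rfl fun i _ => Finset.sum_congr rfl fun j _ => if_congr ne_comm rfl rfl

theorem abs_dotProduct_le_one {u w : n → ℝ} (hu : u ⬝ᵥ u = 1) (hw : w ⬝ᵥ w = 1) :
    |u ⬝ᵥ w| ≤ 1 := by
  have hcs : (u ⬝ᵥ w) ^ 2 ≤ (u ⬝ᵥ u) * (w ⬝ᵥ w) := by
    simpa only [dotProduct, sq] using Finset.sum_mul_sq_le_sq_mul_sq Finset.univ u w
  rw [← sq_le_one_iff_abs_le_one]
  simpa only [hu, hw, one_mul] using hcs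

variable [DecidableEq n] {𝕜 : Type*} [RCLike 𝕜]

theorem IsHermitian.posSemidef_sub_iInf_eigenvalues_smul_one {A : Matrix n n 𝕜}
    (hA : A.IsHermitian) : (A - (⨅ k, hA.eigenvalues k) • (1 : Matrix n n 𝕜)).PosSemidef := by
  set c := ⨅ k, hA.eigenvalues k
  set U : Matrix n n 𝕜 := (hA.eigenvectorUnitary : Matrix n n 𝕜)
  have hD : (diagonal (RCLike.ofReal ∘ fun k => hA.eigenvalues k - c) : Matrix n n 𝕜).PosSemidef :=
    posSemidef_diagonal_iff.mpr fun k => by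
      simpa using sub_nonneg.mpr (ciInf_le (Finite.bddBelow_range hA.eigenvalues) k)
  have hconj : U * diagonal (RCLike.ofReal ∘ fun k => hA.eigenvalues k - c) * Uᴴ = A - c • 1 := by
    have hshift : (diagonal (RCLike.ofReal ∘ fun k => hA.eigenvalues k - c) : Matrix n n 𝕜)
        = diagonal (RCLike.ofReal ∘ hA.eigenvalues) - c • 1 := by
      ext i j
      by_cases h : i = j <;> simp [h, RCLike.real_smul_eq_coe_mul]
    have hUU : U * Uᴴ = 1 := mem_unitaryGroup_iff.mp hA.eigenvectorUnitary.2
    rw [hshift, mul_sub, sub_mul, mul_smul_comm, mul_one, smul_mul_assoc, hUU]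
    conv_rhs => rw [hA.spectral_theorem]
    rfl
  rw [← hconj]
  exact hD.mul_mul_conjTranspose_same U

theorem IsHermitian.iInf_eigenvalues_mul_dotProduct_self_le {A : Matrix n n ℝ}
    (hA : A.IsHermitian) (v : n → ℝ) : (⨅ k, hA.eigenvalues k) * (v ⬝ᵥ v) ≤ v ⬝ᵥ (A *ᵥ v) := by
  have hpsd := hA.posSemidef_sub_iInf_eigenvalues_smul_one.dotProduct_mulVec_nonneg v
  rwa [star_trivial, sub_mulVec, dotProduct_sub, smul_mulVec, one_mulVec, dotProduct_smul,
    smul_eq_mul, sub_nonneg] at hpsd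

end Matrix

section OffDiagonal

variable {ι : Type*} [Fintype ι] [DecidableEq ι]

theorem sum_offDiag_mul_mul_le {c : ι → ι → ℝ} {η : ℝ} (hc : ∀ i j, i ≠ j → |c i j| ≤ η)
    (a : ι → ℝ) :
    ∑ i, ∑ j, (if i ≠ j then c i j * a i * a j else 0)
      ≤ η * (Fintype.card ι - 1) * ∑ i, a i ^ 2 := by
  have hterm : ∀ i j, (if i ≠ j then c i j * a i * a j else 0)
      ≤ (a i ^ 2 + a j ^ 2) / 2 * η - if i = j then (a i ^ 2 + a j ^ 2) / 2 * η else 0 := by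
    intro i j
    by_cases hij : i = j
    · simp [hij]
    · have hcij := abs_le.mp (hc i j hij)
      simp only [hij, ne_eq, not_false_eq_true, if_true, if_false, sub_zero]
      nlinarith [sq_nonneg (a i - a j), sq_nonneg (a i + a j)]
  calc _ ≤ ∑ i, ∑ j, ((a i ^ 2 + a j ^ 2) / 2 * η
          - if i = j then (a i ^ 2 + a j ^ 2) / 2 * η else 0) :=
        Finset.sum_le_sum fun i _ => Finset.sum_le_sum fun j _ => hterm i j
    _ = _ := by
      simp only [Finset.sum_sub_distrib, Finset.sum_ite_eq, Finset.mem_univ, if_true,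
        ← Finset.sum_mul, ← Finset.sum_div, Finset.sum_add_distrib, Finset.sum_const,
        Finset.card_univ, nsmul_eq_mul, ← Finset.mul_sum]
      ring

theorem card_sub_one_mul_le_sub_sum_offDiag {c : ι → ι → ℝ} {δ t : ℝ}
    (hcδ : ∀ i j, i ≠ j → |c i j| ≤ δ) (hc1 : ∀ i j, i ≠ j → |c i j| ≤ 1) (a : ι → ℝ)
    (ht0 : 0 ≤ t) (ht : t ≤ ∑ i, a i ^ 2) :
    (Fintype.card ι - 1) * (1 - δ) * t
      ≤ (Fintype.card ι - 1) * ∑ i, a i ^ 2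
        - ∑ i, ∑ j, (if i ≠ j then c i j * a i * a j else 0) := by
  have hoff := sum_offDiag_mul_mul_le (fun i j hij => le_min (hcδ i j hij) (hc1 i j hij)) a
  rcases isEmpty_or_nonempty ι with hι | hι
  · simp only [Finset.univ_eq_empty, Finset.sum_empty] at ht ⊢
    simp [le_antisymm ht ht0]
  have hcard : (0 : ℝ) ≤ Fintype.card ι - 1 := by
    rw [sub_nonneg, Nat.one_le_cast]
    exact Fintype.card_pos
  calc (Fintype.card ι - 1) * (1 - δ) * t
      ≤ (Fintype.card ι - 1) * (1 - min δ 1) * t := by gcongr; exact min_le_left δ 1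
    _ ≤ (Fintype.card ι - 1) * (1 - min δ 1) * ∑ i, a i ^ 2 := by
        gcongr
        exact mul_nonneg hcard (sub_nonneg.mpr (min_le_right δ 1))
    _ ≤ _ := by linarith

end OffDiagonal

/-- For unit vectors x₁,…,x_n ∈ ℝ^d with |xᵢᵀxⱼ| ≤ δ for i ≠ j and s_min the
minimum eigenvalue of Σᵢ xᵢxᵢᵀ,
(n−1) Σᵢ xᵢxᵢᵀ − Σ_{i≠j} xᵢxᵢᵀxⱼxⱼᵀ ⪰ (n−1)(1−δ)s_min · I; equivalently, for every unit
vector u, (n−1) Σᵢ (uᵀxᵢ)² − Σ_{i≠j} (xᵢᵀxⱼ)(uᵀxᵢ)(uᵀxⱼ) ≥ (n−1)(1−δ)s_min. -/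
theorem statement19 (n d : ℕ) (x : Fin n → Fin d → ℝ) (δ smin : ℝ)
    (hunit : ∀ i, x i ⬝ᵥ x i = 1)
    (hδ : ∀ i j, i ≠ j → |x i ⬝ᵥ x j| ≤ δ)
    (hH : (∑ i : Fin n, Matrix.vecMulVec (x i) (x i)).IsHermitian)
    (hsmin : smin = ⨅ k, hH.eigenvalues k) :
    ((((n : ℝ) - 1) • ∑ i : Fin n, Matrix.vecMulVec (x i) (x i)
        - (∑ i : Fin n, ∑ j : Fin n,
            if i ≠ j then Matrix.vecMulVec (x i) (x i) * Matrix.vecMulVec (x j) (x j) else 0)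
        - (((n : ℝ) - 1) * (1 - δ) * smin) • (1 : Matrix (Fin d) (Fin d) ℝ)).PosSemidef)
    ∧ ∀ u : Fin d → ℝ, u ⬝ᵥ u = 1 →
        ((n : ℝ) - 1) * (1 - δ) * smin ≤
          ((n : ℝ) - 1) * ∑ i : Fin n, (u ⬝ᵥ x i) ^ 2
            - ∑ i : Fin n, ∑ j : Fin n,
                if i ≠ j then (x i ⬝ᵥ x j) * (u ⬝ᵥ x i) * (u ⬝ᵥ x j) else 0 := by
  have hpsd : ∀ i, (vecMulVec (x i) (x i)).PosSemidef := fun i => by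
    simpa using posSemidef_vecMulVec_self_star (x i)
  have hqH : ∀ v, v ⬝ᵥ ((∑ i, vecMulVec (x i) (x i)) *ᵥ v) = ∑ i, (v ⬝ᵥ x i) ^ 2 := fun v => by
    simp only [sum_mulVec, dotProduct_sum, dotProduct_mulVec_vecMulVec_self]
  have hqC : ∀ v, v ⬝ᵥ ((∑ i, ∑ j,
      if i ≠ j then vecMulVec (x i) (x i) * vecMulVec (x j) (x j) else 0) *ᵥ v)
        = ∑ i, ∑ j, if i ≠ j then (x i ⬝ᵥ x j) * (v ⬝ᵥ x i) * (v ⬝ᵥ x j) else 0 := fun v => by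
    simp only [sum_mulVec, dotProduct_sum, apply_ite (· *ᵥ v), apply_ite (v ⬝ᵥ ·), zero_mulVec,
      dotProduct_zero, dotProduct_mulVec_vecMulVec_mul_vecMulVec]
  have hsmin0 : 0 ≤ smin :=
    hsmin ▸ Real.iInf_nonneg (posSemidef_sum _ fun i _ => hpsd i).eigenvalues_nonneg
  have key : ∀ v, ((n : ℝ) - 1) * (1 - δ) * (smin * (v ⬝ᵥ v))
      ≤ ((n : ℝ) - 1) * ∑ i, (v ⬝ᵥ x i) ^ 2
        - ∑ i, ∑ j, if i ≠ j then (x i ⬝ᵥ x j) * (v ⬝ᵥ x i) * (v ⬝ᵥ x j) else 0 := fun v => by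
    simpa using card_sub_one_mul_le_sub_sum_offDiag hδ
      (fun i j _ => abs_dotProduct_le_one (hunit i) (hunit j)) (fun i => v ⬝ᵥ x i)
      (mul_nonneg hsmin0 (by simpa using dotProduct_self_star_nonneg v))
      (hqH v ▸ hsmin ▸ hH.iInf_eigenvalues_mul_dotProduct_self_le v)
  refine ⟨.of_dotProduct_mulVec_nonneg ?_ fun v => ?_, fun u hu => by simpa [hu] using key u⟩
  · exact ((hH.smul (.all _)).sub (isHermitian_sum_offDiag_mul fun i => (hpsd i).isHermitian)).sub
      (isHermitian_one.smul (.all _))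
  · rw [star_trivial, sub_mulVec, sub_mulVec, dotProduct_sub, dotProduct_sub, smul_mulVec,
      smul_mulVec, one_mulVec, dotProduct_smul, dotProduct_smul, smul_eq_mul, smul_eq_mul, hqH, hqC]
    linarith [key v]
end
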